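/- arXiv:1607.03197 — 11 statements merged into one kernel-verified Lean document; each statement's English description precedes it below -/
import Mathlib

section
/- Let Z, Y, R be random variables on a finite probability space such that Y and Z are independent (exclusion restriction) and P(R=1|z,y) > 0 for all (z,y). Suppose two parameterized models agree on all observed-data quantities, i.e., P_{θ1,ξ1}(z, y, R=1) = P_{θ2,ξ2}(z, y, R=1) for all (z,y) and the marginals of Z agree. Then for all (z,y): P_{θ1}(R=1|z,y) / P_{θ2}(R=1|z,y) = P_{ξ2}(y) / P_{ξ1}(y). Consequently, if for every distinct pair of candidates this ratio equality fails for at least one (z,y), the joint distribution P(z,y,r) is identified from the observed-data law. -/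
theorem div_eq_div_of_mul_eq_mul_of_common_factor {K 𝒵 𝒴 : Type*} [Field K]
    {π₁ π₂ : 𝒵 → 𝒴 → K} {f₁ f₂ : 𝒴 → K} {q : 𝒵 → K}
    (hπ₂ : ∀ z y, π₂ z y ≠ 0) (hf₁ : ∀ y, f₁ y ≠ 0) (hq : ∀ z, q z ≠ 0)
    (hobs : ∀ z y, q z * f₁ y * π₁ z y = q z * f₂ y * π₂ z y) (z : 𝒵) (y : 𝒴) :
    π₁ z y / π₂ z y = f₂ y / f₁ y := by
  have hcancel : f₁ y * π₁ z y = f₂ y * π₂ z y := by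
    simpa only [mul_assoc] using mul_left_cancel₀ (hq z) (by simpa only [mul_assoc] using hobs z y)
  rw [div_eq_div_iff (hπ₂ z y) (hf₁ y), mul_comm, hcancel]

theorem stmt0_general {𝒵 𝒴 : Type*}
    (π₁ π₂ : 𝒵 → 𝒴 → ℝ)      -- candidate extended propensity scores P_θᵢ(R=1|z,y)
    (f₁ f₂ : 𝒴 → ℝ)           -- candidate outcome laws P_ξᵢ(y)
    (q₁ q₂ : 𝒵 → ℝ)           -- marginal laws of Z
    (hπ₂ : ∀ z y, 0 < π₂ z y)
    (hf₁ : ∀ y, 0 < f₁ y)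
    (hq₁ : ∀ z, 0 < q₁ z)
    -- the observed-data quantity P(z, y, R=1) agrees between the two candidates
    (hobs : ∀ z y, q₁ z * f₁ y * π₁ z y = q₂ z * f₂ y * π₂ z y)
    -- the marginals of Z agree
    (hmarg : ∀ z, q₁ z = q₂ z) :
    (∀ z y, π₁ z y / π₂ z y = f₂ y / f₁ y) ∧
    ((¬(π₁ = π₂ ∧ f₁ = f₂) → ∃ z y, π₁ z y / π₂ z y ≠ f₂ y / f₁ y) →
      ∀ z y (r : Bool),
        q₁ z * f₁ y * (if r then π₁ z y else 1 - π₁ z y) =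
          q₂ z * f₂ y * (if r then π₂ z y else 1 - π₂ z y)) := by
  have ratio : ∀ z y, π₁ z y / π₂ z y = f₂ y / f₁ y :=
    div_eq_div_of_mul_eq_mul_of_common_factor (fun z y => (hπ₂ z y).ne') (fun y => (hf₁ y).ne')
      (fun z => (hq₁ z).ne') (fun z y => by rw [hobs, hmarg])
  refine ⟨ratio, fun hsep z y r => ?_⟩
  obtain ⟨rfl, rfl⟩ : π₁ = π₂ ∧ f₁ = f₂ := by
    by_contra hne
    obtain ⟨z, y, hz⟩ := hsep hne
    exact hz (ratio z y)
  rw [hmarg z]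

/-- With a valid IV (Y ⊥ Z, so the joint factorizes as
`q(z) * f(y) * P(R=1|z,y)`), if two candidate models agree on all observed-data
quantities (the joint of `(Z, Y, R=1)` and the marginal of `Z`), then the ratio
of extended propensity scores equals the inverse ratio of outcome laws at every
`(z, y)`.  Consequently, if for every distinct pair of candidates this ratio
equality fails somewhere, the joint distribution `P(z,y,r)` is identified. -/
theorem stmt0 {𝒵 𝒴 : Type*} [Fintype 𝒵] [Fintype 𝒴]
    (π₁ π₂ : 𝒵 → 𝒴 → ℝ)      -- candidate extended propensity scores P_θᵢ(R=1|z,y)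
    (f₁ f₂ : 𝒴 → ℝ)           -- candidate outcome laws P_ξᵢ(y)
    (q₁ q₂ : 𝒵 → ℝ)           -- marginal laws of Z
    (hπ₁ : ∀ z y, 0 < π₁ z y) (hπ₂ : ∀ z y, 0 < π₂ z y)
    (hf₁ : ∀ y, 0 < f₁ y) (hf₂ : ∀ y, 0 < f₂ y)
    (hq₁ : ∀ z, 0 < q₁ z)
    -- the observed-data quantity P(z, y, R=1) agrees between the two candidates
    (hobs : ∀ z y, q₁ z * f₁ y * π₁ z y = q₂ z * f₂ y * π₂ z y)
    -- the marginals of Z agree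
    (hmarg : ∀ z, q₁ z = q₂ z) :
    (∀ z y, π₁ z y / π₂ z y = f₂ y / f₁ y) ∧
    ((¬(π₁ = π₂ ∧ f₁ = f₂) → ∃ z y, π₁ z y / π₂ z y ≠ f₂ y / f₁ y) →
      ∀ z y (r : Bool),
        q₁ z * f₁ y * (if r then π₁ z y else 1 - π₁ z y) =
          q₂ z * f₂ y * (if r then π₂ z y else 1 - π₂ z y)) :=
  stmt0_general π₁ π₂ f₁ f₂ q₁ q₂ hπ₂ hf₁ hq₁ hobs hmarg
end

section
/- Let expit(t) = 1/(1+e^{-t}) and suppose q₁, q₂ : ℝ → ℝ are differentiable with q₂' never zero, h₁, h₂ : ℝ → ℝ are differentiable. If expit(q₁(z)+h₁(y)) / expit(q₂(z)+h₂(y)) = g(y) depends only on y, and g is a ratio of two probability densities of Y (so ∫ g dP₁ = 1 for a distribution P₁ of Y), then g ≡ 1; i.e., the two missingness mechanisms coincide. -/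
open MeasureTheory

noncomputable def expit (t : ℝ) : ℝ := 1 / (1 + Real.exp (-t))

/-!
Clearing denominators in `expit (q₁ z + h₁ y) / expit (q₂ z + h₂ y) = g y` gives, for every `z`,
the relation `e^{-h₂ y} e^{-q₂ z} - g y e^{-h₁ y} e^{-q₁ z} = g y - 1`, linear in the three
functions of `y`. Since `q₂` is not constant, taking two values of `z` with different `q₂ z` and
eliminating `g y e^{-h₁ y}` yields `g y = 1 + m e^{-h₂ y}` for a constant `m`. Integrating against
the probability measure gives `m ∫ e^{-h₂} = 0`, and `∫ e^{-h₂} > 0`, so `m = 0` and `g ≡ 1`.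
-/

open Real

lemma expit_pos (t : ℝ) : 0 < expit t := by
  unfold expit
  positivity

lemma exp_neg_mul_exp_neg_sub_of_expit_div_expit {s₁ t₁ s₂ t₂ r : ℝ}
    (h : expit (s₁ + t₁) / expit (s₂ + t₂) = r) :
    exp (-t₂) * exp (-s₂) - r * exp (-t₁) * exp (-s₁) = r - 1 := by
  unfold expit at h
  field_simp at h
  rw [neg_add, exp_add, neg_add, exp_add] at h
  linear_combination h

lemma exists_ne_of_deriv_ne_zero {f : ℝ → ℝ} {x : ℝ} (h : deriv f x ≠ 0) :
    ∃ y, f y ≠ f x := by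
  by_contra! hconst
  exact h (by rw [show f = fun _ => f x from funext hconst, deriv_const])

lemma exists_eq_const_mul_of_linear_relations {ι : Type*} [Nonempty ι] {a b c : ι → ℝ}
    {u₁ u₂ v₁ v₂ : ℝ} (hu : u₁ ≠ u₂) (ha : ∀ i, a i ≠ 0)
    (h₁ : ∀ i, a i * u₁ - b i * v₁ = c i) (h₂ : ∀ i, a i * u₂ - b i * v₂ = c i) :
    ∃ m, ∀ i, c i = m * a i := by
  have hv : v₁ ≠ v₂ := by
    intro hv
    obtain ⟨i⟩ := ‹Nonempty ι›
    have : a i * (u₁ - u₂) = 0 := by linear_combination h₁ i - h₂ i + b i * hv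
    exact mul_ne_zero (ha i) (sub_ne_zero.mpr hu) this
  refine ⟨(u₂ * v₁ - u₁ * v₂) / (v₁ - v₂), fun i => ?_⟩
  rw [div_mul_eq_mul_div, eq_div_iff (sub_ne_zero.mpr hv)]
  linear_combination v₂ * h₁ i - v₁ * h₂ i

lemma eq_zero_of_integral_one_add_mul_exp {α : Type*} [MeasurableSpace α] {μ : Measure α}
    [IsProbabilityMeasure μ] {f : α → ℝ} {m : ℝ} (h : ∫ x, 1 + m * exp (f x) ∂μ = 1) :
    m = 0 := by
  by_contra hm
  have hint : Integrable (fun x => 1 + m * exp (f x)) μ :=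
    Integrable.of_integral_ne_zero (by rw [h]; exact one_ne_zero)
  have hexp : Integrable (fun x => exp (f x)) μ := by
    refine ((hint.sub (integrable_const 1)).div_const m).congr (ae_of_all _ fun x => ?_)
    simp only [Pi.sub_apply]
    field_simp
    ring
  rw [integral_add (integrable_const 1) (hexp.const_mul m), integral_const_mul] at h
  simp only [integral_const, probReal_univ, smul_eq_mul, mul_one, add_eq_left] at h
  exact mul_ne_zero hm (integral_exp_pos hexp).ne' h

theorem stmt2_general (q₁ q₂ h₁ h₂ g : ℝ → ℝ)
    (hq₂' : ∀ z, deriv q₂ z ≠ 0)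
    (hratio : ∀ z y, expit (q₁ z + h₁ y) / expit (q₂ z + h₂ y) = g y)
    (μ : Measure ℝ) [IsProbabilityMeasure μ]
    (hg : ∫ y, g y ∂μ = 1) :
    (∀ y, g y = 1) ∧
      ∀ z y, expit (q₁ z + h₁ y) = expit (q₂ z + h₂ y) := by
  obtain ⟨z, hz⟩ := exists_ne_of_deriv_ne_zero (hq₂' 0)
  have hrel z y := exp_neg_mul_exp_neg_sub_of_expit_div_expit (hratio z y)
  obtain ⟨m, hm⟩ := exists_eq_const_mul_of_linear_relations
    (u₁ := exp (-q₂ z)) (u₂ := exp (-q₂ 0)) (by simpa using hz)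
    (fun y => (exp_pos (-h₂ y)).ne') (hrel z) (hrel 0)
  have hg_eq : g = fun y => 1 + m * exp (-h₂ y) := funext fun y => by linarith [hm y]
  have hm0 : m = 0 := eq_zero_of_integral_one_add_mul_exp (by rwa [hg_eq] at hg)
  have hg1 : ∀ y, g y = 1 := by simp [hg_eq, hm0]
  refine ⟨hg1, fun z y => ?_⟩
  rw [← div_eq_one_iff_eq (expit_pos _).ne', hratio, hg1]

/-- If two separable logistic missingness mechanisms (with
differentiable `q₁, q₂, h₁, h₂` and `q₂'` never zero) have a ratio
`expit (q₁ z + h₁ y) / expit (q₂ z + h₂ y) = g y` depending only on `y`,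
and `g` is a ratio of two probability densities of `Y` (so `∫ g dP₁ = 1`
for a distribution `P₁` of `Y`), then `g ≡ 1`, i.e. the two mechanisms
coincide. -/
theorem stmt2 (q₁ q₂ h₁ h₂ g : ℝ → ℝ)
    (hq₁ : Differentiable ℝ q₁) (hq₂ : Differentiable ℝ q₂)
    (hh₁ : Differentiable ℝ h₁) (hh₂ : Differentiable ℝ h₂)
    (hq₂' : ∀ z, deriv q₂ z ≠ 0)
    (hratio : ∀ z y, expit (q₁ z + h₁ y) / expit (q₂ z + h₂ y) = g y)
    (μ : Measure ℝ) [IsProbabilityMeasure μ]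
    (hg : ∫ y, g y ∂μ = 1) :
    (∀ y, g y = 1) ∧
      ∀ z y, expit (q₁ z + h₁ y) = expit (q₂ z + h₂ y) :=
  stmt2_general q₁ q₂ h₁ h₂ g hq₂' hratio μ hg
end

section
/- Let (X,Z,Y,R) be random variables with R ∈ {0,1}, and define the selection bias function η(x,y,z) = log[ odds(R=1|x,y,z) / odds(R=1|x,Y=0,z) ]. Then the conditional joint law satisfies P(r,y|x,z) = C(x,z)^{-1} · exp[(r-1)η(x,y,z)] · f(y|R=1,x,z) · P(r|Y=0,x,z), where C(x,z) is a normalizing constant, assuming 0 < P(R=1|x,y,z) < 1 everywhere. -/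
/-! Write `a = P(·, R=1)` and `b = P(·, R=0)`. The tilt `exp[(r-1)η]` is `1` for `r = 1` and the
inverse odds ratio `b(y) a(y₀) / (a(y) b(y₀))` for `r = 0`, so each summand of `C(x,z)` collapses
to `a(y₀) P(r,y|x,z)` up to a factor independent of `(r,y)`. Normalising removes that factor. -/

open Real

theorem exp_sub_one_mul_log_oddsRatio_mul {f f₀ : Bool → ℝ} (hf : ∀ b, 0 < f b)
    (hf₀ : ∀ b, 0 < f₀ b) (r : Bool) :
    exp (((if r then (1:ℝ) else 0) - 1) * log ((f true / f false) / (f₀ true / f₀ false))) *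
        f true * f₀ r = f₀ true * f r := by
  cases r with
  | true => simp [mul_comm]
  | false =>
    have hodds : 0 < (f true / f false) / (f₀ true / f₀ false) :=
      div_pos (div_pos (hf true) (hf false)) (div_pos (hf₀ true) (hf₀ false))
    have := (hf true).ne'
    have := (hf₀ false).ne'
    simp only [Bool.false_eq_true, if_false, zero_sub, neg_one_mul, exp_neg, exp_log hodds]
    field_simp

theorem div_sum_sum_eq_inv_sum_sum_mul {ι κ : Type*} [Fintype ι] [Fintype κ] {q g : ι → κ → ℝ}
    {k : ℝ} (hk : k ≠ 0) (hg : ∀ i j, g i j = k * q i j) (i : ι) (j : κ) :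
    q i j / ∑ i', ∑ j', q i' j' = (∑ i', ∑ j', g i' j')⁻¹ * g i j := by
  simp only [hg, ← Finset.mul_sum, mul_inv, div_eq_inv_mul]
  rw [mul_comm k⁻¹, mul_assoc, inv_mul_cancel_left₀ hk]

theorem stmt5_general {𝒳 𝒵 𝒴 : Type*} [Fintype 𝒴]
    (p : 𝒳 → 𝒵 → 𝒴 → Bool → ℝ)   -- joint law of (X, Z, Y, R)
    (y₀ : 𝒴)                       -- baseline outcome value "Y = 0"
    (hpos : ∀ x z y b, 0 < p x z y b)
    (η : 𝒳 → 𝒴 → 𝒵 → ℝ)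
    (hη : ∀ x y z, η x y z =
      Real.log ((p x z y true / p x z y false) / (p x z y₀ true / p x z y₀ false)))
    (C : 𝒳 → 𝒵 → ℝ)
    (hC : ∀ x z, C x z = ∑ y, ∑ r : Bool,
      Real.exp (((if r then (1:ℝ) else 0) - 1) * η x y z) *
        (p x z y true / ∑ y', p x z y' true) *
        (p x z y₀ r / (p x z y₀ true + p x z y₀ false))) :
    ∀ x z y (r : Bool),
      p x z y r / (∑ y', ∑ b, p x z y' b) =
        (C x z)⁻¹ * Real.exp (((if r then (1:ℝ) else 0) - 1) * η x y z) *
          (p x z y true / ∑ y', p x z y' true) *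
          (p x z y₀ r / (p x z y₀ true + p x z y₀ false)) := by
  intro x z y r
  set S := ∑ y', p x z y' true
  set N₀ := p x z y₀ true + p x z y₀ false
  have hS : 0 < S := Finset.sum_pos (fun y' _ => hpos x z y' true) ⟨y, Finset.mem_univ y⟩
  have hN₀ : 0 < N₀ := add_pos (hpos x z y₀ true) (hpos x z y₀ false)
  have hk : p x z y₀ true / S / N₀ ≠ 0 := (div_pos (div_pos (hpos x z y₀ true) hS) hN₀).ne'
  have hterm : ∀ y' r', exp (((if r' then (1:ℝ) else 0) - 1) * η x y' z) *
      (p x z y' true / S) * (p x z y₀ r' / N₀) = p x z y₀ true / S / N₀ * p x z y' r' := by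
    intro y' r'
    rw [hη]
    linear_combination S⁻¹ * N₀⁻¹ *
      exp_sub_one_mul_log_oddsRatio_mul (hpos x z y') (hpos x z y₀) r'
  rw [hC, div_sum_sum_eq_inv_sum_sum_mul hk hterm, mul_assoc _ (exp _), mul_assoc _ (exp _ * _)]

/-- odds-ratio factorization of the conditional joint law.
With `η(x,y,z) = log [ odds(R=1|x,y,z) / odds(R=1|x,Y=y₀,z) ]` the selection
bias function (baseline outcome value `y₀`), the conditional joint law of
`(R, Y)` given `(X, Z)` satisfies
`P(r,y|x,z) = C(x,z)⁻¹ exp[(r-1) η(x,y,z)] f(y|R=1,x,z) P(r|Y=y₀,x,z)`,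
assuming `0 < P(R=1|x,y,z) < 1` everywhere (here: all joint probabilities are
strictly positive). -/
theorem stmt5 {𝒳 𝒵 𝒴 : Type*} [Fintype 𝒳] [Fintype 𝒵] [Fintype 𝒴]
    (p : 𝒳 → 𝒵 → 𝒴 → Bool → ℝ)   -- joint law of (X, Z, Y, R)
    (y₀ : 𝒴)                       -- baseline outcome value "Y = 0"
    (hpos : ∀ x z y b, 0 < p x z y b)
    (hsum : ∑ x, ∑ z, ∑ y, ∑ b, p x z y b = 1)
    (η : 𝒳 → 𝒴 → 𝒵 → ℝ)
    (hη : ∀ x y z, η x y z =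
      Real.log ((p x z y true / p x z y false) / (p x z y₀ true / p x z y₀ false)))
    (C : 𝒳 → 𝒵 → ℝ)
    (hC : ∀ x z, C x z = ∑ y, ∑ r : Bool,
      Real.exp (((if r then (1:ℝ) else 0) - 1) * η x y z) *
        (p x z y true / ∑ y', p x z y' true) *
        (p x z y₀ r / (p x z y₀ true + p x z y₀ false))) :
    ∀ x z y (r : Bool),
      p x z y r / (∑ y', ∑ b, p x z y' b) =
        (C x z)⁻¹ * Real.exp (((if r then (1:ℝ) else 0) - 1) * η x y z) *
          (p x z y true / ∑ y', p x z y' true) *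
          (p x z y₀ r / (p x z y₀ true + p x z y₀ false)) :=
  stmt5_general p y₀ hpos η hη C hC
end

section
/- Under the odds-ratio parametrization P(r,y|x,z) ∝ exp[(r-1)η(x,y,z)] f(y|R=1,x,z) P(r|Y=0,x,z), the conditional density of Y among nonrespondents satisfies f(y|R=0,x,z) = exp[-η(x,y,z)] f(y|R=1,x,z) / E{ exp[-η(x,Y,z)] | R=1, x, z }. -/
open Finset

theorem Real.exp_neg_log_odds_ratio_mul {a b c d : ℝ} (ha : 0 < a) (hb : 0 < b) (hc : 0 < c)
    (hd : 0 < d) : Real.exp (-Real.log ((a / b) / (c / d))) * a = c / d * b := by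
  rw [← Real.log_inv, Real.exp_log (by positivity)]
  field_simp

theorem div_sum_eq_div_sum_of_eq_const_mul {ι K : Type*} [Fintype ι] [Field K] {f g : ι → K}
    {c : K} (hc : c ≠ 0) (hfg : ∀ i, f i = c * g i) (i : ι) :
    f i / ∑ j, f j = g i / ∑ j, g j := by
  simp only [hfg, ← mul_sum, mul_div_mul_left _ _ hc]

theorem stmt6_general {𝒳 𝒵 𝒴 : Type*} [Fintype 𝒳] [Fintype 𝒵] [Fintype 𝒴]
    (p : 𝒳 → 𝒵 → 𝒴 → Bool → ℝ)   -- joint law of (X, Z, Y, R)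
    (y₀ : 𝒴)                       -- baseline outcome value "Y = 0"
    (hpos : ∀ x z y b, 0 < p x z y b)
    (η : 𝒳 → 𝒴 → 𝒵 → ℝ)
    (hη : ∀ x y z, η x y z =
      Real.log ((p x z y true / p x z y false) / (p x z y₀ true / p x z y₀ false))) :
    ∀ x z y,
      p x z y false / (∑ y', p x z y' false) =
        Real.exp (-η x y z) * (p x z y true / ∑ y', p x z y' true) /
          (∑ y', Real.exp (-η x y' z) * (p x z y' true / ∑ y'', p x z y'' true)) := by
  intro x z y
  have hS : 0 < ∑ y', p x z y' true := sum_pos (fun y' _ => hpos x z y' true) ⟨y, mem_univ y⟩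
  -- Tilting the respondent density by `exp (-η)` recovers the nonrespondent one up to a constant.
  have htilt : ∀ y', Real.exp (-η x y' z) * (p x z y' true / ∑ y'', p x z y'' true) =
      (p x z y₀ true / p x z y₀ false) / (∑ y'', p x z y'' true) * p x z y' false := by
    intro y'
    rw [hη, ← mul_div_assoc, Real.exp_neg_log_odds_ratio_mul (hpos ..) (hpos ..) (hpos ..)
      (hpos ..)]
    ring
  have hc : (p x z y₀ true / p x z y₀ false) / (∑ y'', p x z y'' true) ≠ 0 :=
    div_ne_zero (div_pos (hpos ..) (hpos ..)).ne' hS.ne'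
  exact (div_sum_eq_div_sum_of_eq_const_mul hc htilt y).symm

/-- under the odds-ratio parametrization with selection bias
function `η(x,y,z) = log [ odds(R=1|x,y,z) / odds(R=1|x,Y=y₀,z) ]`, the outcome
density among nonrespondents satisfies
`f(y|R=0,x,z) = exp(-η(x,y,z)) f(y|R=1,x,z) / E[exp(-η(x,Y,z)) | R=1,x,z]`. -/
theorem stmt6 {𝒳 𝒵 𝒴 : Type*} [Fintype 𝒳] [Fintype 𝒵] [Fintype 𝒴]
    (p : 𝒳 → 𝒵 → 𝒴 → Bool → ℝ)   -- joint law of (X, Z, Y, R)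
    (y₀ : 𝒴)                       -- baseline outcome value "Y = 0"
    (hpos : ∀ x z y b, 0 < p x z y b)
    (hsum : ∑ x, ∑ z, ∑ y, ∑ b, p x z y b = 1)
    (η : 𝒳 → 𝒴 → 𝒵 → ℝ)
    (hη : ∀ x y z, η x y z =
      Real.log ((p x z y true / p x z y false) / (p x z y₀ true / p x z y₀ false))) :
    ∀ x z y,
      p x z y false / (∑ y', p x z y' false) =
        Real.exp (-η x y z) * (p x z y true / ∑ y', p x z y' true) /
          (∑ y', Real.exp (-η x y' z) * (p x z y' true / ∑ y'', p x z y'' true)) :=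
  stmt6_general p y₀ hpos η hη
end

section
/- Suppose Y ⊥ Z | X (exclusion restriction), P(R=1|X,Y,Z) = π(X,Y,Z) > σ > 0 almost surely, and let B(X) = E[h₂(X,Z)|X]. Then for any bounded functions g and h₂: E[ (R/π(X,Y,Z)) · g(X,Y) · (h₂(X,Z) - B(X)) ] = 0. -/
/-! Summing out `R` against the true propensity score turns `R / π` into `1`, so the IPW moment
equals `E[g(X,Y) (h₂(X,Z) - B(X))]`. Conditionally on `X = x` the law of `(Z, Y)` factorizes,
so this conditional expectation splits as `E[g(X,Y) | x] · E[h₂(X,Z) - B(X) | x]`, and the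
second factor vanishes by the choice of `B`. -/

open Finset

lemma sum_bool_ipw_mul {q : Bool → ℝ} {π : ℝ} (hπ0 : π ≠ 0) (hq : q true = π * (q true + q false))
    (c : ℝ) :
    ∑ b, q b * ((if b then (1 : ℝ) else 0) / π * c) = (∑ b, q b) * c := by
  simp only [Fintype.sum_bool, if_true, Bool.false_eq_true, if_false, zero_div, zero_mul,
    mul_zero, add_zero]
  conv_lhs => rw [hq]
  field_simp

lemma sum_mul_sub_eq_zero_of_mul_sum_eq {ι : Type*} [Fintype ι] {m h : ι → ℝ} {B : ℝ}
    (hB : B * ∑ i, m i = ∑ i, m i * h i) :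
    ∑ i, m i * (h i - B) = 0 := by
  simp only [mul_sub, sum_sub_distrib, ← sum_mul]
  linarith

/-- `hind` says that `w`, normalized by its total mass, is the product of its marginals; multiplying
by the total mass therefore splits the double sum into a product of two marginal sums. -/
lemma sum_sum_mul_mul_eq_zero_of_indep {ι κ : Type*} [Fintype ι] [Fintype κ] {w : ι → κ → ℝ}
    (hw : ∀ i k, 0 ≤ w i k)
    (hind : ∀ i k, w i k * ∑ i', ∑ k', w i' k' = (∑ i', w i' k) * ∑ k', w i k')
    {u : ι → ℝ} (v : κ → ℝ) (hu : ∑ i, (∑ k, w i k) * u i = 0) :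
    ∑ i, ∑ k, w i k * (v k * u i) = 0 := by
  set total := ∑ i', ∑ k', w i' k'
  by_cases h0 : total = 0
  · have hzero : ∀ i k, w i k = 0 := fun i k =>
      congrFun ((Fintype.sum_eq_zero_iff_of_nonneg (hw i)).mp
        (congrFun ((Fintype.sum_eq_zero_iff_of_nonneg fun i' =>
          sum_nonneg fun k' _ => hw i' k').mp h0) i)) k
    simp [hzero]
  · refine (mul_eq_zero.mp ?_).resolve_left h0
    calc total * ∑ i, ∑ k, w i k * (v k * u i)
        = ∑ i, ∑ k, (w i k * total) * (v k * u i) := by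
          rw [mul_sum]
          refine sum_congr rfl fun i _ => ?_
          rw [mul_sum]
          exact sum_congr rfl fun k _ => by ring
      _ = (∑ i, (∑ k, w i k) * u i) * ∑ k, (∑ i', w i' k) * v k := by
          rw [sum_mul_sum]
          exact sum_congr rfl fun i _ => sum_congr rfl fun k _ => by rw [hind]; ring
      _ = 0 := by rw [hu, zero_mul]

theorem stmt8_general {𝒳 𝒵 𝒴 : Type*} [Fintype 𝒳] [Fintype 𝒵] [Fintype 𝒴]
    (p : 𝒳 → 𝒵 → 𝒴 → Bool → ℝ)   -- joint law of (X, Z, Y, R)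
    (π : 𝒳 → 𝒴 → 𝒵 → ℝ) (σ : ℝ) (g : 𝒳 → 𝒴 → ℝ) (h₂ : 𝒳 → 𝒵 → ℝ) (B : 𝒳 → ℝ)
    (hnn : ∀ x z y b, 0 ≤ p x z y b)
    (hσ : 0 < σ) (hπσ : ∀ x y z, σ < π x y z)
    -- π is the conditional probability of R = 1 given (X, Y, Z)
    (hπ : ∀ x y z, p x z y true = π x y z * (p x z y true + p x z y false))
    -- exclusion restriction Y ⊥ Z | X:  P(x,z,y) P(x) = P(x,y) P(x,z)
    (hci : ∀ x z y, (∑ b, p x z y b) * (∑ z', ∑ y', ∑ b, p x z' y' b) =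
      (∑ z', ∑ b, p x z' y b) * (∑ y', ∑ b, p x z y' b))
    -- B(x) = E[h₂(X,Z) | X = x]
    (hB : ∀ x, B x * (∑ z, ∑ y, ∑ b, p x z y b) =
      ∑ z, (∑ y, ∑ b, p x z y b) * h₂ x z) :
    ∑ x, ∑ z, ∑ y, ∑ b, p x z y b *
      (((if b then (1:ℝ) else 0) / π x y z) * g x y * (h₂ x z - B x)) = 0 := by
  have hR : ∀ x z y, ∑ b, p x z y b *
      (((if b then (1:ℝ) else 0) / π x y z) * g x y * (h₂ x z - B x)) =
      (∑ b, p x z y b) * (g x y * (h₂ x z - B x)) := fun x z y => by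
    simp only [mul_assoc]
    exact sum_bool_ipw_mul (hσ.trans (hπσ x y z)).ne' (hπ x y z) _
  simp only [hR]
  exact sum_eq_zero fun x _ => sum_sum_mul_mul_eq_zero_of_indep
    (fun z y => sum_nonneg fun b _ => hnn x z y b) (hci x) (g x)
    (sum_mul_sub_eq_zero_of_mul_sum_eq (hB x))

/-- unbiasedness of IPW estimating function (4.8) under the
exclusion restriction `Y ⊥ Z | X`.  With the true extended propensity score
`π > σ > 0` and `B(X) = E[h₂(X,Z)|X]`, we have
`E[(R/π(X,Y,Z)) g(X,Y) (h₂(X,Z) - B(X))] = 0`. -/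
theorem stmt8 {𝒳 𝒵 𝒴 : Type*} [Fintype 𝒳] [Fintype 𝒵] [Fintype 𝒴]
    (p : 𝒳 → 𝒵 → 𝒴 → Bool → ℝ)   -- joint law of (X, Z, Y, R)
    (π : 𝒳 → 𝒴 → 𝒵 → ℝ) (σ : ℝ) (g : 𝒳 → 𝒴 → ℝ) (h₂ : 𝒳 → 𝒵 → ℝ) (B : 𝒳 → ℝ)
    (hnn : ∀ x z y b, 0 ≤ p x z y b)
    (hsum : ∑ x, ∑ z, ∑ y, ∑ b, p x z y b = 1)
    (hσ : 0 < σ) (hπσ : ∀ x y z, σ < π x y z)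
    -- π is the conditional probability of R = 1 given (X, Y, Z)
    (hπ : ∀ x y z, p x z y true = π x y z * (p x z y true + p x z y false))
    -- exclusion restriction Y ⊥ Z | X:  P(x,z,y) P(x) = P(x,y) P(x,z)
    (hci : ∀ x z y, (∑ b, p x z y b) * (∑ z', ∑ y', ∑ b, p x z' y' b) =
      (∑ z', ∑ b, p x z' y b) * (∑ y', ∑ b, p x z y' b))
    -- B(x) = E[h₂(X,Z) | X = x]
    (hB : ∀ x, B x * (∑ z, ∑ y, ∑ b, p x z y b) =
      ∑ z, (∑ y, ∑ b, p x z y b) * h₂ x z) :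
    ∑ x, ∑ z, ∑ y, ∑ b, p x z y b *
      (((if b then (1:ℝ) else 0) / π x y z) * g x y * (h₂ x z - B x)) = 0 :=
  stmt8_general p π σ g h₂ B hnn hσ hπσ hπ hci hB
end

section
/- Suppose Y ⊥ Z | X and let m(X,Z) = E[q₂(X,Y) | R=0, X, Z]. Then for any bounded q₁: E[ (q₁(X,Z) - E[q₁(X,Z)|X]) · ( (1-R)·m(X,Z) + R·q₂(X,Y) ) ] = 0. -/
/-!
Conditioning on `(X, Z)` first, the tower property over `R` replaces `m(X,Z)` by `q₂(X,Y)`, so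
the estimating function has the mean of `(q₁ - E[q₁|X]) · E[q₂(X,Y) | X, Z]`. Under `Y ⊥ Z | X`
the second factor depends on `X` alone, and the centred first factor has conditional mean zero
given `X`. In the finite setting, for each `x` this is the factorisation
`P(z,y|x) = P(z|x) P(y|x)` of the double sum over `(z, y)`.
-/

open Finset

lemma sum_mul_ite_eq_of_mul_sum_eq {β : Type*} [Fintype β] (p : β → Bool → ℝ) (q : β → ℝ)
    (m c : ℝ) (hm : m * ∑ y, p y false = ∑ y, p y false * q y) :
    ∑ y, ∑ b, p y b * (c * if b then q y else m) = c * ∑ y, (∑ b, p y b) * q y := by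
  have htower : ∑ y, (∑ b, p y b) * q y = ∑ y, p y true * q y + m * ∑ y, p y false := by
    rw [hm, ← sum_add_distrib]
    simp only [Fintype.sum_bool, add_mul]
  rw [htower]
  simp only [Fintype.sum_bool, if_true, Bool.false_eq_true, if_false, sum_add_distrib, mul_add,
    mul_sum]
  congr 1 <;> exact sum_congr rfl fun _ _ => by ring

lemma sum_sub_mul_eq_zero_of_mul_sum_eq {α : Type*} [Fintype α] (f μ : α → ℝ) (A : ℝ)
    (hA : A * ∑ z, μ z = ∑ z, μ z * f z) :
    ∑ z, (f z - A) * μ z = 0 := by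
  rw [← sub_eq_zero_of_eq hA.symm]
  simp only [sub_mul, sum_sub_distrib, ← mul_sum, mul_comm (f _)]

section Independence

variable {α β : Type*} [Fintype α] [Fintype β] (w : α → β → ℝ)

lemma sum_mul_sum_mul_total_eq_of_indep
    (hind : ∀ z y, w z y * ∑ z', ∑ y', w z' y' = (∑ z', w z' y) * ∑ y', w z y')
    (h : α → ℝ) (g : β → ℝ) :
    (∑ z, h z * ∑ y, w z y * g y) * ∑ z', ∑ y', w z' y' =
      (∑ z, h z * ∑ y, w z y) * ∑ y, (∑ z', w z' y) * g y := by
  generalize ∑ z', ∑ y', w z' y' = T at hind ⊢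
  calc (∑ z, h z * ∑ y, w z y * g y) * T = ∑ z, ∑ y, h z * g y * (w z y * T) := by
        rw [sum_mul]
        refine sum_congr rfl fun z _ => ?_
        rw [mul_sum, sum_mul]
        exact sum_congr rfl fun y _ => by ring
    _ = ∑ z, ∑ y, h z * g y * ((∑ z', w z' y) * ∑ y', w z y') := by simp only [hind]
    _ = (∑ z, h z * ∑ y, w z y) * ∑ y, (∑ z', w z' y) * g y := by
        rw [sum_mul_sum]
        exact sum_congr rfl fun z _ => sum_congr rfl fun y _ => by ring

lemma eq_zero_of_sum_sum_eq_zero (hnn : ∀ z y, 0 ≤ w z y)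
    (h0 : ∑ z, ∑ y, w z y = 0) (z : α) (y : β) : w z y = 0 := by
  have hz := (Fintype.sum_eq_zero_iff_of_nonneg fun z => sum_nonneg fun y _ => hnn z y).mp h0
  exact congrFun ((Fintype.sum_eq_zero_iff_of_nonneg (hnn z)).mp (congrFun hz z)) y

/-- Discrete form of `E[(f(Z) - E f(Z)) · E[g(Y) | Z]] = 0` for independent `Z` and `Y`, where
`w` is an unnormalised joint law and `A` is the mean of `f` under its `Z`-marginal. -/
theorem sum_sub_mul_condSum_eq_zero_of_indep (hnn : ∀ z y, 0 ≤ w z y)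
    (hind : ∀ z y, w z y * ∑ z', ∑ y', w z' y' = (∑ z', w z' y) * ∑ y', w z y')
    (f : α → ℝ) (g : β → ℝ) (A : ℝ)
    (hA : A * ∑ z, ∑ y, w z y = ∑ z, (∑ y, w z y) * f z) :
    ∑ z, (f z - A) * ∑ y, w z y * g y = 0 := by
  by_cases h0 : ∑ z, ∑ y, w z y = 0
  · simp [eq_zero_of_sum_sum_eq_zero w hnn h0]
  · have hcentred := sum_sub_mul_eq_zero_of_mul_sum_eq f (fun z => ∑ y, w z y) A hA
    have hprod := sum_mul_sum_mul_total_eq_of_indep w hind (fun z => f z - A) g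
    rw [hcentred, zero_mul] at hprod
    exact (mul_eq_zero.mp hprod).resolve_right h0

end Independence

theorem stmt11_general {𝒳 𝒵 𝒴 : Type*} [Fintype 𝒳] [Fintype 𝒵] [Fintype 𝒴]
    (p : 𝒳 → 𝒵 → 𝒴 → Bool → ℝ)   -- joint law of (X, Z, Y, R)
    (q₁ : 𝒳 → 𝒵 → ℝ) (q₂ : 𝒳 → 𝒴 → ℝ) (m : 𝒳 → 𝒵 → ℝ) (A : 𝒳 → ℝ)
    (hnn : ∀ x z y b, 0 ≤ p x z y b)
    -- exclusion restriction Y ⊥ Z | X:  P(x,z,y) P(x) = P(x,y) P(x,z)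
    (hci : ∀ x z y, (∑ b, p x z y b) * (∑ z', ∑ y', ∑ b, p x z' y' b) =
      (∑ z', ∑ b, p x z' y b) * (∑ y', ∑ b, p x z y' b))
    -- m(x,z) = E[q₂(X,Y) | R = 0, X = x, Z = z]
    (hm : ∀ x z, m x z * (∑ y, p x z y false) = ∑ y, p x z y false * q₂ x y)
    -- A(x) = E[q₁(X,Z) | X = x]
    (hA : ∀ x, A x * (∑ z, ∑ y, ∑ b, p x z y b) =
      ∑ z, (∑ y, ∑ b, p x z y b) * q₁ x z) :
    ∑ x, ∑ z, ∑ y, ∑ b, p x z y b *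
      ((q₁ x z - A x) * (if b then q₂ x y else m x z)) = 0 := by
  refine sum_eq_zero fun x _ => ?_
  simp only [sum_mul_ite_eq_of_mul_sum_eq (p x _) (q₂ x) _ _ (hm x _)]
  exact sum_sub_mul_condSum_eq_zero_of_indep (fun z y => ∑ b, p x z y b)
    (fun z y => sum_nonneg fun b _ => hnn x z y b) (hci x) (q₁ x) (q₂ x) (A x) (hA x)

/-- unbiasedness of the OR estimating function (4.10) under the
exclusion restriction `Y ⊥ Z | X`.  With `m(X,Z) = E[q₂(X,Y) | R=0, X, Z]`,
`E[(q₁(X,Z) - E[q₁(X,Z)|X]) ((1-R) m(X,Z) + R q₂(X,Y))] = 0`. -/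
theorem stmt11 {𝒳 𝒵 𝒴 : Type*} [Fintype 𝒳] [Fintype 𝒵] [Fintype 𝒴]
    (p : 𝒳 → 𝒵 → 𝒴 → Bool → ℝ)   -- joint law of (X, Z, Y, R)
    (q₁ : 𝒳 → 𝒵 → ℝ) (q₂ : 𝒳 → 𝒴 → ℝ) (m : 𝒳 → 𝒵 → ℝ) (A : 𝒳 → ℝ)
    (hnn : ∀ x z y b, 0 ≤ p x z y b)
    (hsum : ∑ x, ∑ z, ∑ y, ∑ b, p x z y b = 1)
    -- exclusion restriction Y ⊥ Z | X:  P(x,z,y) P(x) = P(x,y) P(x,z)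
    (hci : ∀ x z y, (∑ b, p x z y b) * (∑ z', ∑ y', ∑ b, p x z' y' b) =
      (∑ z', ∑ b, p x z' y b) * (∑ y', ∑ b, p x z y' b))
    -- m(x,z) = E[q₂(X,Y) | R = 0, X = x, Z = z]
    (hm : ∀ x z, m x z * (∑ y, p x z y false) = ∑ y, p x z y false * q₂ x y)
    -- A(x) = E[q₁(X,Z) | X = x]
    (hA : ∀ x, A x * (∑ z, ∑ y, ∑ b, p x z y b) =
      ∑ z, (∑ y, ∑ b, p x z y b) * q₁ x z) :
    ∑ x, ∑ z, ∑ y, ∑ b, p x z y b *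
      ((q₁ x z - A x) * (if b then q₂ x y else m x z)) = 0 :=
  stmt11_general p q₁ q₂ m A hnn hci hm hA
end

section
/- Suppose the extended propensity score has the form π*(X,Y,Z) = expit(λ(X,Z) + η(X,Y,Z)) for possibly misspecified λ but correct η, where η is the true selection bias function so that the true f(y|R=0,x,z) ∝ exp[-η(x,y,z)] f(y|R=1,x,z). Let ρ(X,Z) = E[u(X,Y)|R=0,X,Z] be computed under the true law. Define G = (R/π*)·(u(X,Y) - ρ(X,Z)) + ρ(X,Z). Then E[G | X, Z] = E[u(X,Y) | X, Z], and hence E[G] = E[u(X,Y)]. -/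
/-!
Within a stratum `(x, z)` the true law satisfies `P(R=0, y) = e^{-(λ₀+η)} P(R=1, y)`, so
`P(R=1, y) / π*(y) = P(R=1, y) + e^{λ₀-λ} P(R=0, y)`: since `η` is correct, reweighting the
responders by `1/π*` reproduces the whole stratum up to the factor `e^{λ₀-λ}`, which does not
depend on `y`. Hence `E[G - u | x, z] = (e^{λ₀-λ} - 1) · E[(u - ρ) 1{R=0} | x, z] = 0`.
-/

open Finset Real

lemma div_expit (a t : ℝ) : a / expit t = a * (1 + exp (-t)) := by
  rw [expit, div_div_eq_mul_div, div_one]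

lemma eq_exp_neg_mul_of_eq_expit_mul {a b t : ℝ} (h : a = expit t * (a + b)) :
    b = exp (-t) * a := by
  have hpos : 0 < 1 + exp (-t) := by positivity
  rw [expit, one_div, ← div_eq_inv_mul, eq_div_iff hpos.ne'] at h
  linear_combination -h

lemma div_expit_add_eq_of_eq_expit_mul {a b l l₀ e : ℝ} (h : a = expit (l₀ + e) * (a + b)) :
    a / expit (l + e) = a + exp (l₀ - l) * b := by
  have hb : exp (l₀ - l) * b = a * exp (-(l + e)) := by
    rw [eq_exp_neg_mul_of_eq_expit_mul h, ← mul_assoc, ← exp_add]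
    ring_nf
  rw [div_expit, hb]
  ring

lemma sum_mul_sub_eq_zero {ι : Type*} [Fintype ι] {w v : ι → ℝ} {r : ℝ}
    (hr : r * ∑ i, w i = ∑ i, w i * v i) : ∑ i, w i * (v i - r) = 0 := by
  rw [sum_congr rfl fun i _ => mul_sub (w i) (v i) r, sum_sub_distrib, ← sum_mul, ← hr]
  ring

lemma sum_augmented_ipw_eq {𝒴 : Type*} [Fintype 𝒴] (q : 𝒴 → Bool → ℝ) (l l₀ r : ℝ)
    (e v : 𝒴 → ℝ) (htrue : ∀ y, q y true = expit (l₀ + e y) * (q y true + q y false))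
    (hr : r * ∑ y, q y false = ∑ y, q y false * v y) :
    ∑ y, ∑ b, q y b * ((if b then (v y - r) / expit (l + e y) else 0) + r) =
      ∑ y, ∑ b, q y b * v y := by
  have hterm : ∀ y, ∑ b, q y b * ((if b then (v y - r) / expit (l + e y) else 0) + r) =
      ∑ b, q y b * v y + (exp (l₀ - l) - 1) * (q y false * (v y - r)) := by
    intro y
    have htilt := div_expit_add_eq_of_eq_expit_mul (l := l) (htrue y)
    simp only [Fintype.sum_bool, if_true, Bool.false_eq_true, if_false]
    rw [mul_add, ← mul_div_assoc, mul_comm (q y true), mul_div_assoc, htilt]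
    ring
  rw [sum_congr rfl fun y _ => hterm y, sum_add_distrib, ← mul_sum,
    sum_mul_sub_eq_zero hr, mul_zero, add_zero]

theorem stmt13_general {𝒳 𝒵 𝒴 : Type*} [Fintype 𝒳] [Fintype 𝒵] [Fintype 𝒴]
    (p : 𝒳 → 𝒵 → 𝒴 → Bool → ℝ)   -- joint law of (X, Z, Y, R)
    (lam lam₀ : 𝒳 → 𝒵 → ℝ) (η : 𝒳 → 𝒴 → 𝒵 → ℝ)
    (u : 𝒳 → 𝒴 → ℝ) (ρ : 𝒳 → 𝒵 → ℝ) (G : 𝒳 → 𝒵 → 𝒴 → Bool → ℝ)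
    -- true extended propensity score: expit (λ₀(x,z) + η(x,y,z))
    (htrue : ∀ x z y, p x z y true =
      expit (lam₀ x z + η x y z) * (p x z y true + p x z y false))
    -- ρ(x,z) = E[u(X,Y) | R = 0, X = x, Z = z] under the true law
    (hρ : ∀ x z, ρ x z * (∑ y, p x z y false) = ∑ y, p x z y false * u x y)
    -- G = (R/π*)(u - ρ) + ρ with the working propensity score π*
    (hG : ∀ x z y b, G x z y b =
      (if b then (u x y - ρ x z) / expit (lam x z + η x y z) else 0) + ρ x z) :
    (∀ x z, ∑ y, ∑ b, p x z y b * G x z y b =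
      ∑ y, ∑ b, p x z y b * u x y) ∧
    ∑ x, ∑ z, ∑ y, ∑ b, p x z y b * G x z y b =
      ∑ x, ∑ z, ∑ y, ∑ b, p x z y b * u x y := by
  have hstratum : ∀ x z, ∑ y, ∑ b, p x z y b * G x z y b = ∑ y, ∑ b, p x z y b * u x y := by
    intro x z
    simp only [hG]
    exact sum_augmented_ipw_eq (p x z) (lam x z) (lam₀ x z) (ρ x z) (fun y => η x y z)
      (u x) (htrue x z) (hρ x z)
  exact ⟨hstratum, sum_congr rfl fun x _ => sum_congr rfl fun z _ => hstratum x z⟩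

/-- the outcome-model half of double robustness (equation S3).
The true law satisfies `logit P(R=1|x,y,z) = λ₀(x,z) + η(x,y,z)`; the working
propensity score `π* = expit (λ(X,Z) + η(X,Y,Z))` uses a possibly wrong
baseline `λ` but the correct selection bias function `η`; and
`ρ(X,Z) = E[u(X,Y)|R=0,X,Z]` is computed under the true law.  Then
`G = (R/π*)(u(X,Y) - ρ(X,Z)) + ρ(X,Z)` satisfies
`E[G | X,Z] = E[u(X,Y) | X,Z]` and hence `E[G] = E[u(X,Y)]`. -/
theorem stmt13 {𝒳 𝒵 𝒴 : Type*} [Fintype 𝒳] [Fintype 𝒵] [Fintype 𝒴]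
    (p : 𝒳 → 𝒵 → 𝒴 → Bool → ℝ)   -- joint law of (X, Z, Y, R)
    (lam lam₀ : 𝒳 → 𝒵 → ℝ) (η : 𝒳 → 𝒴 → 𝒵 → ℝ)
    (u : 𝒳 → 𝒴 → ℝ) (ρ : 𝒳 → 𝒵 → ℝ) (G : 𝒳 → 𝒵 → 𝒴 → Bool → ℝ)
    (hnn : ∀ x z y b, 0 ≤ p x z y b)
    (hsum : ∑ x, ∑ z, ∑ y, ∑ b, p x z y b = 1)
    -- true extended propensity score: expit (λ₀(x,z) + η(x,y,z))
    (htrue : ∀ x z y, p x z y true =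
      expit (lam₀ x z + η x y z) * (p x z y true + p x z y false))
    -- ρ(x,z) = E[u(X,Y) | R = 0, X = x, Z = z] under the true law
    (hρ : ∀ x z, ρ x z * (∑ y, p x z y false) = ∑ y, p x z y false * u x y)
    -- G = (R/π*)(u - ρ) + ρ with the working propensity score π*
    (hG : ∀ x z y b, G x z y b =
      (if b then (u x y - ρ x z) / expit (lam x z + η x y z) else 0) + ρ x z) :
    (∀ x z, ∑ y, ∑ b, p x z y b * G x z y b =
      ∑ y, ∑ b, p x z y b * u x y) ∧
    ∑ x, ∑ z, ∑ y, ∑ b, p x z y b * G x z y b =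
      ∑ x, ∑ z, ∑ y, ∑ b, p x z y b * u x y :=
  stmt13_general p lam lam₀ η u ρ G htrue hρ hG
end

section
/- Suppose Y ⊥ Z | X and π(X,Y,Z) > σ > 0 a.s. Define G as in the doubly robust construction with either (a) correct π and arbitrary ρ(X,Z), or (b) the structure of the outcome-model half (correct η and ρ, arbitrary baseline λ). Then in either case, for any bounded v: E[ (v(X,Z) - E[v(X,Z)|X]) · G ] = 0, where in case (a) one uses E[G|X,Y,Z] = u(X,Y), and in case (b) E[G|X,Z] = E[u(X,Y)|X,Z] = E[u(X,Y)|X]. -/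
/-!
Conditionally on `(X, Z)`, the doubly robust `G` is unbiased for `u(X, Y)`: in case (a) because
inverse propensity weighting with the true score recovers `u` for each `y`; in case (b) because
the misspecified baseline only rescales the odds by `exp (λ₀ - λ)`, and the resulting error term
is `∑ P(R = 0, y | x, z) (u - ρ)`, which vanishes for the correct `ρ`. Since `Y ⊥ Z | X`, the
product `P(x) · P(x, z, y)` factors as `P(x, y) · P(x, z)`, so `P(x)` times the `x`-slice of the
sum is `∑_y P(x, y) u(x, y) · ∑_z P(x, z) (v(x, z) - E[v | x]) = 0`.
-/

open Finset

lemma inv_expit (t : ℝ) : (expit t)⁻¹ = 1 + Real.exp (-t) := by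
  simp [expit]

lemma mul_exp_neg_eq_of_eq_expit_mul {a b t : ℝ} (h : a = expit t * (a + b)) :
    a * Real.exp (-t) = b := by
  have h' : a * (expit t)⁻¹ = a + b := by
    have hpos : 0 < expit t := by unfold expit; positivity
    rw [eq_comm, ← div_eq_mul_inv, eq_div_iff hpos.ne', mul_comm]
    exact h.symm
  rw [inv_expit] at h'
  linarith

lemma div_expit_add_of_eq_expit_mul {a b l l₀ e : ℝ} (h : a = expit (l₀ + e) * (a + b)) :
    a / expit (l + e) = a + Real.exp (l₀ - l) * b := by
  have hshift : Real.exp (-(l + e)) = Real.exp (l₀ - l) * Real.exp (-(l₀ + e)) := by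
    rw [← Real.exp_add]; ring_nf
  rw [div_eq_mul_inv, inv_expit, mul_add, mul_one, hshift, ← mul_exp_neg_eq_of_eq_expit_mul h]
  ring

lemma sum_bool_mul_dr_weight (p : Bool → ℝ) (w ρ : ℝ) :
    ∑ b, p b * ((if b then w else 0) + ρ) = p true * w + (∑ b, p b) * ρ := by
  simp only [Fintype.sum_bool, if_true, Bool.false_eq_true, if_false]
  ring

section UnbiasedGivenXZ

variable {𝒴 : Type*} [Fintype 𝒴] (p : 𝒴 → Bool → ℝ) (u : 𝒴 → ℝ)

theorem sum_mul_dr_weight_of_propensity (π : 𝒴 → ℝ) (ρ : ℝ) (hπ : ∀ y, π y ≠ 0)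
    (hp : ∀ y, p y true = π y * (p y true + p y false)) :
    ∑ y, ∑ b, p y b * ((if b then (u y - ρ) / π y else 0) + ρ) = ∑ y, (∑ b, p y b) * u y := by
  refine sum_congr rfl fun y _ => ?_
  have hipw : p y true * ((u y - ρ) / π y) = (p y true + p y false) * (u y - ρ) := by
    field_simp [hπ y]
    linear_combination (u y - ρ) * hp y
  rw [sum_bool_mul_dr_weight, hipw, Fintype.sum_bool]
  ring

theorem sum_mul_dr_weight_of_outcome (η : 𝒴 → ℝ) (ρ l l₀ : ℝ)
    (hp : ∀ y, p y true = expit (l₀ + η y) * (p y true + p y false))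
    (hρ : ρ * ∑ y, p y false = ∑ y, p y false * u y) :
    ∑ y, ∑ b, p y b * ((if b then (u y - ρ) / expit (l + η y) else 0) + ρ) =
      ∑ y, (∑ b, p y b) * u y := by
  have hweight : ∀ y, p y true * ((u y - ρ) / expit (l + η y)) =
      (p y true + Real.exp (l₀ - l) * p y false) * (u y - ρ) := fun y => by
    rw [← mul_div_assoc, mul_div_right_comm, div_expit_add_of_eq_expit_mul (hp y)]
  simp only [sum_bool_mul_dr_weight, hweight]
  have hres : ∑ y, p y false * (u y - ρ) = 0 := by
    simp only [mul_sub, sum_sub_distrib, ← sum_mul]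
    linarith
  calc ∑ y, ((p y true + Real.exp (l₀ - l) * p y false) * (u y - ρ) +
          (∑ b, p y b) * ρ)
      = ∑ y, (∑ b, p y b) * u y +
          (Real.exp (l₀ - l) - 1) * ∑ y, p y false * (u y - ρ) := by
        rw [mul_sum, ← sum_add_distrib]
        exact sum_congr rfl fun y _ => by simp only [Fintype.sum_bool]; ring
    _ = ∑ y, (∑ b, p y b) * u y := by rw [hres, mul_zero, add_zero]

end UnbiasedGivenXZ

/-- With `q` the joint law of `(Z, Y)` given `X = x` (unnormalised) and `c = E[v(Z) | X = x]`. -/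
theorem sum_sub_condMean_mul_eq_zero {𝒵 𝒴 : Type*} [Fintype 𝒵] [Fintype 𝒴]
    (q : 𝒵 → 𝒴 → ℝ) (hq : ∀ z y, 0 ≤ q z y) (v : 𝒵 → ℝ) (c : ℝ) (u : 𝒴 → ℝ)
    (hci : ∀ z y, q z y * ∑ z', ∑ y', q z' y' = (∑ z', q z' y) * ∑ y', q z y')
    (hc : c * ∑ z, ∑ y, q z y = ∑ z, (∑ y, q z y) * v z) :
    ∑ z, (v z - c) * ∑ y, q z y * u y = 0 := by
  set N := ∑ z, ∑ y, q z y
  by_cases hN : N = 0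
  · have hzero : ∀ z y, q z y = 0 := fun z y => by
      have hz := (Fintype.sum_eq_zero_iff_of_nonneg fun z => sum_nonneg fun y _ => hq z y).1 hN
      exact congrFun ((Fintype.sum_eq_zero_iff_of_nonneg (hq z)).1 (congrFun hz z)) y
    simp [hzero]
  have hcentered : ∑ z, (∑ y', q z y') * (v z - c) = 0 := by
    simp only [mul_sub, sum_sub_distrib, ← sum_mul]
    linarith
  refine (mul_eq_zero.1 ?_).resolve_left hN
  calc N * ∑ z, (v z - c) * ∑ y, q z y * u y
      = ∑ y, ∑ z, ((∑ z', q z' y) * u y) * ((∑ y', q z y') * (v z - c)) := by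
        simp only [mul_sum]
        rw [sum_comm]
        refine sum_congr rfl fun y _ => sum_congr rfl fun z _ => ?_
        linear_combination (v z - c) * u y * hci z y
    _ = 0 := by simp only [← mul_sum, hcentered, mul_zero, sum_const_zero]

theorem stmt14_general {𝒳 𝒵 𝒴 : Type*} [Fintype 𝒳] [Fintype 𝒵] [Fintype 𝒴]
    (p : 𝒳 → 𝒵 → 𝒴 → Bool → ℝ)   -- joint law of (X, Z, Y, R)
    (π : 𝒳 → 𝒴 → 𝒵 → ℝ) (σ : ℝ)
    (u : 𝒳 → 𝒴 → ℝ) (ρ : 𝒳 → 𝒵 → ℝ) (v : 𝒳 → 𝒵 → ℝ) (Vbar : 𝒳 → ℝ)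
    (G : 𝒳 → 𝒵 → 𝒴 → Bool → ℝ)
    (hnn : ∀ x z y b, 0 ≤ p x z y b)
    (hσ : 0 < σ) (hπσ : ∀ x y z, σ < π x y z)
    -- exclusion restriction Y ⊥ Z | X:  P(x,z,y) P(x) = P(x,y) P(x,z)
    (hci : ∀ x z y, (∑ b, p x z y b) * (∑ z', ∑ y', ∑ b, p x z' y' b) =
      (∑ z', ∑ b, p x z' y b) * (∑ y', ∑ b, p x z y' b))
    -- Vbar(x) = E[v(X,Z) | X = x]
    (hV : ∀ x, Vbar x * (∑ z, ∑ y, ∑ b, p x z y b) =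
      ∑ z, (∑ y, ∑ b, p x z y b) * v x z)
    -- G = (R/π)(u - ρ) + ρ
    (hG : ∀ x z y b, G x z y b =
      (if b then (u x y - ρ x z) / π x y z else 0) + ρ x z)
    -- case (a): π is correct; or case (b): π has correct η and ρ is correct
    (hcase :
      (∀ x y z, p x z y true = π x y z * (p x z y true + p x z y false)) ∨
      ((∃ lam lam₀ : 𝒳 → 𝒵 → ℝ, ∃ η : 𝒳 → 𝒴 → 𝒵 → ℝ,
          (∀ x y z, π x y z = expit (lam x z + η x y z)) ∧
          (∀ x z y, p x z y true =
            expit (lam₀ x z + η x y z) * (p x z y true + p x z y false))) ∧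
        (∀ x z, ρ x z * (∑ y, p x z y false) = ∑ y, p x z y false * u x y))) :
    ∑ x, ∑ z, ∑ y, ∑ b, p x z y b * ((v x z - Vbar x) * G x z y b) = 0 := by
  have hunbiased : ∀ x z, ∑ y, ∑ b, p x z y b * G x z y b = ∑ y, (∑ b, p x z y b) * u x y := by
    intro x z
    simp only [hG]
    rcases hcase with hprop | ⟨⟨lam, lam₀, η, hπ, hp⟩, hρ⟩
    · exact sum_mul_dr_weight_of_propensity _ _ _ _
        (fun y => (hσ.trans (hπσ x y z)).ne') (fun y => hprop x y z)
    · simp only [hπ]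
      exact sum_mul_dr_weight_of_outcome _ _ _ _ _ _ (fun y => hp x z y) (hρ x z)
  refine sum_eq_zero fun x _ => ?_
  calc ∑ z, ∑ y, ∑ b, p x z y b * ((v x z - Vbar x) * G x z y b)
      = ∑ z, (v x z - Vbar x) * ∑ y, (∑ b, p x z y b) * u x y := by
        refine sum_congr rfl fun z _ => ?_
        simp only [mul_left_comm _ (v x z - Vbar x), ← mul_sum, hunbiased]
    _ = 0 := sum_sub_condMean_mul_eq_zero _ (fun z y => sum_nonneg fun b _ => hnn x z y b)
        _ _ _ (hci x) (hV x)

/-- unbiasedness of the doubly robust estimating equation (4.13)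
in the union model.  Under `Y ⊥ Z | X` and `π > σ > 0`, with
`G = (R/π)(u(X,Y) - ρ(X,Z)) + ρ(X,Z)`, in either case
(a) `π` is the true extended propensity score (arbitrary `ρ`), or
(b) `π = expit (λ + η)` with correct selection bias `η` (the true score being
`expit (λ₀ + η)`) and correct `ρ = E[u(X,Y)|R=0,X,Z]`,
one has `E[(v(X,Z) - E[v(X,Z)|X]) G] = 0` for any `v`. -/
theorem stmt14 {𝒳 𝒵 𝒴 : Type*} [Fintype 𝒳] [Fintype 𝒵] [Fintype 𝒴]
    (p : 𝒳 → 𝒵 → 𝒴 → Bool → ℝ)   -- joint law of (X, Z, Y, R)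
    (π : 𝒳 → 𝒴 → 𝒵 → ℝ) (σ : ℝ)
    (u : 𝒳 → 𝒴 → ℝ) (ρ : 𝒳 → 𝒵 → ℝ) (v : 𝒳 → 𝒵 → ℝ) (Vbar : 𝒳 → ℝ)
    (G : 𝒳 → 𝒵 → 𝒴 → Bool → ℝ)
    (hnn : ∀ x z y b, 0 ≤ p x z y b)
    (hsum : ∑ x, ∑ z, ∑ y, ∑ b, p x z y b = 1)
    (hσ : 0 < σ) (hπσ : ∀ x y z, σ < π x y z)
    -- exclusion restriction Y ⊥ Z | X:  P(x,z,y) P(x) = P(x,y) P(x,z)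
    (hci : ∀ x z y, (∑ b, p x z y b) * (∑ z', ∑ y', ∑ b, p x z' y' b) =
      (∑ z', ∑ b, p x z' y b) * (∑ y', ∑ b, p x z y' b))
    -- Vbar(x) = E[v(X,Z) | X = x]
    (hV : ∀ x, Vbar x * (∑ z, ∑ y, ∑ b, p x z y b) =
      ∑ z, (∑ y, ∑ b, p x z y b) * v x z)
    -- G = (R/π)(u - ρ) + ρ
    (hG : ∀ x z y b, G x z y b =
      (if b then (u x y - ρ x z) / π x y z else 0) + ρ x z)
    -- case (a): π is correct; or case (b): π has correct η and ρ is correct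
    (hcase :
      (∀ x y z, p x z y true = π x y z * (p x z y true + p x z y false)) ∨
      ((∃ lam lam₀ : 𝒳 → 𝒵 → ℝ, ∃ η : 𝒳 → 𝒴 → 𝒵 → ℝ,
          (∀ x y z, π x y z = expit (lam x z + η x y z)) ∧
          (∀ x z y, p x z y true =
            expit (lam₀ x z + η x y z) * (p x z y true + p x z y false))) ∧
        (∀ x z, ρ x z * (∑ y, p x z y false) = ∑ y, p x z y false * u x y))) :
    ∑ x, ∑ z, ∑ y, ∑ b, p x z y b * ((v x z - Vbar x) * G x z y b) = 0 :=
  stmt14_general p π σ u ρ v Vbar G hnn hσ hπσ hci hV hG hcase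
end

section
/- Let L be a random vector with density f(L), where L = (X, Z, Y) and the model imposes only the conditional independence Y ⊥ Z | X. In L²(f), the tangent space is N₁ = { s₁(Y|X) + s₂(Z|X) + s₃(X) : E[s₁|X] = E[s₂|X] = 0, E[s₃] = 0 }, and its orthogonal complement is N₁^⊥ = { C - C† : C = c(Y,X,Z) arbitrary square-integrable, C† = E[C|Z,X] + E[C|Y,X] - E[C|X] }. -/
/-!
If `f` is orthogonal to the tangent space, testing it against `s₃ = E[f|X]`, then (now that
`E[f|X] = 0` makes them admissible) against `s₂ = E[f|Z,X]` and `s₁ = E[f|Y,X]`, gives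
`E[E[f|X]²] = E[E[f|Z,X]²] = E[E[f|Y,X]²] = 0`; so `C = f` has `C† = 0`.
Conversely, `Y ⊥ Z | X` gives `E[E[C|Y,X] | Z,X] = E[C|X]`, hence `E[C - C†|Z,X] = 0`, and
symmetrically `E[C - C†|Y,X] = 0`; a function with both conditional means zero is orthogonal
to every function of `(Y,X)` and of `(Z,X)`, in particular to the tangent space.
-/

open Finset

noncomputable section

section WeightedMean

variable {ι : Type*} [Fintype ι]

def weightedMean (w g : ι → ℝ) : ℝ := (∑ i, w i * g i) / ∑ i, w i

theorem sum_mul_weightedMean {w : ι → ℝ} (hw : ∀ i, 0 < w i) (g : ι → ℝ) :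
    ∑ i, w i * weightedMean w g = ∑ i, w i * g i := by
  rw [← sum_mul]
  rcases isEmpty_or_nonempty ι with hι | hι
  · simp
  · exact mul_div_cancel₀ _ (sum_pos (fun i _ => hw i) univ_nonempty).ne'

theorem sum_mul_eq_zero_of_sum_mul_weightedMean_eq_zero {κ : Type*} [Fintype κ]
    {w : κ → ι → ℝ} (hw : ∀ k i, 0 < w k i) (g : κ → ι → ℝ)
    (h : ∑ k, ∑ i, w k i * (g k i * weightedMean (w k) (g k)) = 0) (k : κ) :
    ∑ i, w k i * g k i = 0 := by
  have hsq : ∀ k, ∑ i, w k i * (g k i * weightedMean (w k) (g k)) =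
      (∑ i, w k i * g k i) ^ 2 / ∑ i, w k i := fun k => by
    simp only [weightedMean, ← mul_assoc, ← sum_mul]
    ring
  simp only [hsq] at h
  have hk := (sum_eq_zero_iff_of_nonneg fun k _ =>
    div_nonneg (sq_nonneg _) (sum_nonneg fun i _ => (hw k i).le)).1 h k (mem_univ k)
  rcases div_eq_zero_iff.1 hk with hk | hk
  · exact pow_eq_zero_iff two_ne_zero |>.1 hk
  · rcases isEmpty_or_nonempty ι with hι | hι
    · simp
    · exact absurd hk (sum_pos (fun i _ => hw k i) univ_nonempty).ne'

end WeightedMean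

section ConditionalIndependence

variable {𝒳 𝒵 𝒴 : Type*} [Fintype 𝒵] [Fintype 𝒴]

def condExpX (p C : 𝒳 → 𝒵 → 𝒴 → ℝ) (x : 𝒳) : ℝ :=
  (∑ z, ∑ y, p x z y * C x z y) / ∑ z, ∑ y, p x z y

def dagger (p C : 𝒳 → 𝒵 → 𝒴 → ℝ) (x : 𝒳) (z : 𝒵) (y : 𝒴) : ℝ :=
  weightedMean (p x z) (C x z) + weightedMean (fun z' => p x z' y) (fun z' => C x z' y) -
    condExpX p C x

theorem condExpX_eq_weightedMean (p C : 𝒳 → 𝒵 → 𝒴 → ℝ) (x : 𝒳) :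
    condExpX p C x =
      weightedMean (fun zy : 𝒵 × 𝒴 => p x zy.1 zy.2) (fun zy => C x zy.1 zy.2) := by
  simp only [condExpX, weightedMean, Fintype.sum_prod_type]

theorem condExpX_swap (p C : 𝒳 → 𝒵 → 𝒴 → ℝ) (x : 𝒳) :
    condExpX (fun x y z => p x z y) (fun x y z => C x z y) x = condExpX p C x := by
  simp only [condExpX]
  rw [sum_comm, sum_comm (f := fun y z => p x z y)]

theorem dagger_swap (p C : 𝒳 → 𝒵 → 𝒴 → ℝ) (x : 𝒳) (z : 𝒵) (y : 𝒴) :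
    dagger (fun x y z => p x z y) (fun x y z => C x z y) x y z = dagger p C x z y := by
  simp only [dagger, condExpX_swap]
  ring

variable (p : 𝒳 → 𝒵 → 𝒴 → ℝ)

/-- `Y ⊥ Z | X` under the law `p` of `(X, Z, Y)`, stated without division. -/
def CondIndep : Prop :=
  ∀ x z y, p x z y * (∑ z', ∑ y', p x z' y') = (∑ z', p x z' y) * (∑ y', p x z y')

theorem CondIndep.swap {p : 𝒳 → 𝒵 → 𝒴 → ℝ} (hci : CondIndep p) :
    CondIndep fun x y z => p x z y := fun x y z => by
  rw [sum_comm, hci, mul_comm]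

theorem sum_mul_weightedMean_XY (hpos : ∀ x z y, 0 < p x z y)
    (hci : CondIndep p)
    (C : 𝒳 → 𝒵 → 𝒴 → ℝ) (x : 𝒳) (z : 𝒵) :
    ∑ y, p x z y * weightedMean (fun z' => p x z' y) (fun z' => C x z' y) =
      (∑ y, p x z y) * condExpX p C x := by
  calc ∑ y, p x z y * weightedMean (fun z' => p x z' y) (fun z' => C x z' y)
      = ∑ y, (∑ y', p x z y') / (∑ z', ∑ y', p x z' y') * ∑ z', p x z' y * C x z' y := by
        refine sum_congr rfl fun y _ => ?_
        have hr : 0 < ∑ z', p x z' y := sum_pos (fun z' _ => hpos x z' y) ⟨z, mem_univ z⟩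
        have hP : 0 < ∑ z', ∑ y', p x z' y' :=
          sum_pos (fun z' _ => sum_pos (fun y' _ => hpos x z' y') ⟨y, mem_univ y⟩) ⟨z, mem_univ z⟩
        rw [weightedMean, eq_div_iff hP.ne' |>.2 (hci x z y)]
        field_simp
    _ = (∑ y, p x z y) * condExpX p C x := by
        rw [← mul_sum, sum_comm (f := fun y z' => p x z' y * C x z' y), condExpX]
        ring

theorem sum_mul_sub_dagger_XZ (hpos : ∀ x z y, 0 < p x z y)
    (hci : CondIndep p)
    (C : 𝒳 → 𝒵 → 𝒴 → ℝ) (x : 𝒳) (z : 𝒵) :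
    ∑ y, p x z y * (C x z y - dagger p C x z y) = 0 := by
  simp only [dagger, mul_sub, mul_add, sum_sub_distrib, sum_add_distrib,
    sum_mul_weightedMean (hpos x z), sum_mul_weightedMean_XY p hpos hci, ← sum_mul]
  ring

theorem sum_mul_sub_dagger_XY (hpos : ∀ x z y, 0 < p x z y)
    (hci : CondIndep p)
    (C : 𝒳 → 𝒵 → 𝒴 → ℝ) (x : 𝒳) (y : 𝒴) :
    ∑ z, p x z y * (C x z y - dagger p C x z y) = 0 := by
  simpa only [dagger_swap] using
    sum_mul_sub_dagger_XZ (fun x y z => p x z y) (fun x y z => hpos x z y) hci.swap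
      (fun x y z => C x z y) x y

variable [Fintype 𝒳]

theorem sum_mul_eq_zero_of_orthogonal_X (hpos : ∀ x z y, 0 < p x z y) {f : 𝒳 → 𝒵 → 𝒴 → ℝ}
    (hf : ∑ x, ∑ z, ∑ y, p x z y * f x z y = 0)
    (horth : ∀ s : 𝒳 → ℝ, ∑ x, ∑ z, ∑ y, p x z y * s x = 0 →
      ∑ x, ∑ z, ∑ y, p x z y * (f x z y * s x) = 0) (x : 𝒳) :
    ∑ z, ∑ y, p x z y * f x z y = 0 := by
  have hw : ∀ x (zy : 𝒵 × 𝒴), 0 < p x zy.1 zy.2 := fun x zy => hpos x zy.1 zy.2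
  have hmean : ∑ x, ∑ z, ∑ y, p x z y * condExpX p f x = 0 := by
    have := fun x => sum_mul_weightedMean (hw x) (fun zy => f x zy.1 zy.2)
    simp only [Fintype.sum_prod_type, ← condExpX_eq_weightedMean] at this
    simpa only [this] using hf
  have := sum_mul_eq_zero_of_sum_mul_weightedMean_eq_zero hw (fun x zy => f x zy.1 zy.2)
    (by simpa only [Fintype.sum_prod_type, ← condExpX_eq_weightedMean] using horth _ hmean) x
  simpa only [Fintype.sum_prod_type] using this

theorem sum_mul_eq_zero_of_orthogonal_XZ (hpos : ∀ x z y, 0 < p x z y) {f : 𝒳 → 𝒵 → 𝒴 → ℝ}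
    (hfX : ∀ x, ∑ z, ∑ y, p x z y * f x z y = 0)
    (horth : ∀ s : 𝒳 → 𝒵 → ℝ, (∀ x, ∑ z, ∑ y, p x z y * s x z = 0) →
      ∑ x, ∑ z, ∑ y, p x z y * (f x z y * s x z) = 0) (x : 𝒳) (z : 𝒵) :
    ∑ y, p x z y * f x z y = 0 := by
  have hmean : ∀ x, ∑ z, ∑ y, p x z y * weightedMean (p x z) (f x z) = 0 := fun x => by
    simpa only [sum_mul_weightedMean (hpos x _)] using hfX x
  exact sum_mul_eq_zero_of_sum_mul_weightedMean_eq_zero (w := fun xz : 𝒳 × 𝒵 => p xz.1 xz.2)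
    (fun xz => hpos xz.1 xz.2) (fun xz => f xz.1 xz.2)
    (by simpa only [Fintype.sum_prod_type] using horth _ hmean) (x, z)

theorem sum_mul_eq_zero_of_orthogonal_XY (hpos : ∀ x z y, 0 < p x z y) {f : 𝒳 → 𝒵 → 𝒴 → ℝ}
    (hfX : ∀ x, ∑ z, ∑ y, p x z y * f x z y = 0)
    (horth : ∀ s : 𝒳 → 𝒴 → ℝ, (∀ x, ∑ z, ∑ y, p x z y * s x y = 0) →
      ∑ x, ∑ z, ∑ y, p x z y * (f x z y * s x y) = 0) (x : 𝒳) (y : 𝒴) :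
    ∑ z, p x z y * f x z y = 0 :=
  sum_mul_eq_zero_of_orthogonal_XZ (fun x y z => p x z y) (fun x y z => hpos x z y)
    (fun x => by rw [sum_comm]; exact hfX x)
    (fun s hs => (sum_congr rfl fun x _ => sum_comm).trans
      (horth s fun x => by rw [sum_comm]; exact hs x)) x y

theorem sum_mul_mul_add_eq_zero {f : 𝒳 → 𝒵 → 𝒴 → ℝ}
    (hXZ : ∀ x z, ∑ y, p x z y * f x z y = 0) (hXY : ∀ x y, ∑ z, p x z y * f x z y = 0)
    (s₁ : 𝒳 → 𝒴 → ℝ) (s₂ : 𝒳 → 𝒵 → ℝ) (s₃ : 𝒳 → ℝ) :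
    ∑ x, ∑ z, ∑ y, p x z y * (f x z y * (s₁ x y + s₂ x z + s₃ x)) = 0 := by
  have h₁ : ∀ x, ∑ z, ∑ y, p x z y * (f x z y * s₁ x y) = 0 := fun x => by
    rw [sum_comm]
    simp only [← mul_assoc, ← sum_mul, hXY, zero_mul, sum_const_zero]
  simp only [mul_add, sum_add_distrib, h₁, zero_add]
  simp only [← mul_assoc, ← sum_mul, hXZ, zero_mul, sum_const_zero, add_zero]

end ConditionalIndependence

end

theorem stmt15_general {𝒳 𝒵 𝒴 : Type*} [Fintype 𝒳] [Fintype 𝒵] [Fintype 𝒴]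
    (p : 𝒳 → 𝒵 → 𝒴 → ℝ)           -- joint law of L = (X, Z, Y)
    (hpos : ∀ x z y, 0 < p x z y)
    -- conditional independence Y ⊥ Z | X:  P(x,z,y) P(x) = P(x,y) P(x,z)
    (hci : ∀ x z y, p x z y * (∑ z', ∑ y', p x z' y') =
      (∑ z', p x z' y) * (∑ y', p x z y')) :
    ∀ f : 𝒳 → 𝒵 → 𝒴 → ℝ,
      (∑ x, ∑ z, ∑ y, p x z y * f x z y = 0) →
      ((∀ (s₁ : 𝒳 → 𝒴 → ℝ) (s₂ : 𝒳 → 𝒵 → ℝ) (s₃ : 𝒳 → ℝ),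
          (∀ x, ∑ z, ∑ y, p x z y * s₁ x y = 0) →
          (∀ x, ∑ z, ∑ y, p x z y * s₂ x z = 0) →
          (∑ x, ∑ z, ∑ y, p x z y * s₃ x = 0) →
          ∑ x, ∑ z, ∑ y, p x z y * (f x z y * (s₁ x y + s₂ x z + s₃ x)) = 0)
        ↔ ∃ C : 𝒳 → 𝒵 → 𝒴 → ℝ, ∀ x z y,
            f x z y = C x z y -
              ((∑ y', p x z y' * C x z y') / (∑ y', p x z y') +
               (∑ z', p x z' y * C x z' y) / (∑ z', p x z' y) -
               (∑ z', ∑ y', p x z' y' * C x z' y') /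
                 (∑ z', ∑ y', p x z' y'))) := by
  intro f hf
  constructor
  · intro horth
    have hX := sum_mul_eq_zero_of_orthogonal_X p hpos hf fun s₃ hs₃ => by
      simpa using horth 0 0 s₃ (by simp) (by simp) hs₃
    have hXZ := sum_mul_eq_zero_of_orthogonal_XZ p hpos hX fun s₂ hs₂ => by
      simpa using horth 0 s₂ 0 (by simp) hs₂ (by simp)
    have hXY := sum_mul_eq_zero_of_orthogonal_XY p hpos hX fun s₁ hs₁ => by
      simpa using horth s₁ 0 0 hs₁ (by simp) (by simp)
    exact ⟨f, fun x z y => by simp [hX x, hXZ x z, hXY x y]⟩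
  · rintro ⟨C, hC⟩ s₁ s₂ s₃ - - -
    obtain rfl : f = fun x z y => C x z y - dagger p C x z y := funext₃ hC
    exact sum_mul_mul_add_eq_zero p (sum_mul_sub_dagger_XZ p hpos hci C)
      (sum_mul_sub_dagger_XY p hpos hci C) s₁ s₂ s₃

/-- tangent space of the model imposing only `Y ⊥ Z | X`.
In `L²(f)` of mean-zero functions of `L = (X,Z,Y)`, the tangent space is
`N₁ = {s₁(Y|X) + s₂(Z|X) + s₃(X)}` with the conditional-mean-zero conditions,
and its orthocomplement is `N₁^⊥ = {C - C†}` with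
`C† = E[C|Z,X] + E[C|Y,X] - E[C|X]`: a mean-zero `f` is orthogonal to all of
`N₁` iff it has the form `C - C†`. -/
theorem stmt15 {𝒳 𝒵 𝒴 : Type*} [Fintype 𝒳] [Fintype 𝒵] [Fintype 𝒴]
    (p : 𝒳 → 𝒵 → 𝒴 → ℝ)           -- joint law of L = (X, Z, Y)
    (hpos : ∀ x z y, 0 < p x z y)
    (hsum : ∑ x, ∑ z, ∑ y, p x z y = 1)
    -- conditional independence Y ⊥ Z | X:  P(x,z,y) P(x) = P(x,y) P(x,z)
    (hci : ∀ x z y, p x z y * (∑ z', ∑ y', p x z' y') =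
      (∑ z', p x z' y) * (∑ y', p x z y')) :
    ∀ f : 𝒳 → 𝒵 → 𝒴 → ℝ,
      (∑ x, ∑ z, ∑ y, p x z y * f x z y = 0) →
      ((∀ (s₁ : 𝒳 → 𝒴 → ℝ) (s₂ : 𝒳 → 𝒵 → ℝ) (s₃ : 𝒳 → ℝ),
          (∀ x, ∑ z, ∑ y, p x z y * s₁ x y = 0) →
          (∀ x, ∑ z, ∑ y, p x z y * s₂ x z = 0) →
          (∑ x, ∑ z, ∑ y, p x z y * s₃ x = 0) →
          ∑ x, ∑ z, ∑ y, p x z y * (f x z y * (s₁ x y + s₂ x z + s₃ x)) = 0)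
        ↔ ∃ C : 𝒳 → 𝒵 → 𝒴 → ℝ, ∀ x z y,
            f x z y = C x z y -
              ((∑ y', p x z y' * C x z y') / (∑ y', p x z y') +
               (∑ z', p x z' y * C x z' y) / (∑ z', p x z' y) -
               (∑ z', ∑ y', p x z' y' * C x z' y') /
                 (∑ z', ∑ y', p x z' y'))) :=
  stmt15_general p hpos hci
end

section
/- Let Y and Z be binary, X arbitrary discrete. Under Y ⊥ Z | X, every element of the orthocomplement N₁^⊥ = {C - C†} (with C† = E[C|Z,X] + E[C|Y,X] - E[C|X]) can be written as b(X)·(Y - E[Y|X])·(Z - E[Z|X]) for some function b of X, and conversely every such product lies in N₁^⊥. -/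
/-!
Fix `x` and view `p x` as a positive weight `w` on the `2 × 2` table with rows indexed by `Z`
and columns by `Y`; then `rowMean`, `colMean` and `totalMean` are `E[C|Z,X]`, `E[C|Y,X]` and
`E[C|X]`, and `doublyCenter w C = C - C†`. Independence gives `E[E[C|Y,X]|Z,X] = E[C|X]`, so
`C - C†` has vanishing `w`-weighted sums along every row and every column; conversely such
a doubly centred function is fixed by `C ↦ C - C†`. On a `2 × 2` table these constraints leave
one degree of freedom, since the row and column through `(1, 1)` determine the other three entries,
and `(Y - E[Y|X]) (Z - E[Z|X])` is a doubly centred function that is nonzero at `(1, 1)`.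
-/

open Finset

namespace TwoWayTable

section WeightedMean

variable {ι : Type*} [Fintype ι]

noncomputable def weightedMean (v g : ι → ℝ) : ℝ :=
  (∑ i, v i * g i) / ∑ i, v i

theorem sum_mul_weightedMean {v : ι → ℝ} (hv : ∀ i, 0 ≤ v i) (g : ι → ℝ) :
    (∑ i, v i) * weightedMean v g = ∑ i, v i * g i := by
  rw [weightedMean, mul_div_assoc']
  refine mul_div_cancel_left_of_imp fun h => sum_eq_zero fun i _ => ?_
  rw [(sum_eq_zero_iff_of_nonneg fun i _ => hv i).mp h i (mem_univ i), zero_mul]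

end WeightedMean

section General

variable {α β : Type*} [Fintype α] [Fintype β]

noncomputable def rowMean (w C : α → β → ℝ) (a : α) : ℝ :=
  weightedMean (w a) (C a)

noncomputable def colMean (w C : α → β → ℝ) (b : β) : ℝ :=
  weightedMean (fun a => w a b) (fun a => C a b)

noncomputable def totalMean (w C : α → β → ℝ) : ℝ :=
  (∑ a, ∑ b, w a b * C a b) / ∑ a, ∑ b, w a b

noncomputable def doublyCenter (w C : α → β → ℝ) : α → β → ℝ :=
  fun a b => C a b - (rowMean w C a + colMean w C b - totalMean w C)

def IsIndependent (w : α → β → ℝ) : Prop :=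
  ∀ a b, w a b * ∑ a', ∑ b', w a' b' = (∑ a', w a' b) * ∑ b', w a b'

def doublyCentered (w : α → β → ℝ) : Submodule ℝ (α → β → ℝ) where
  carrier := {f | (∀ a, ∑ b, w a b * f a b = 0) ∧ ∀ b, ∑ a, w a b * f a b = 0}
  add_mem' := by
    rintro f g ⟨hf₁, hf₂⟩ ⟨hg₁, hg₂⟩
    exact ⟨fun a => by simp [mul_add, sum_add_distrib, hf₁, hg₁],
      fun b => by simp [mul_add, sum_add_distrib, hf₂, hg₂]⟩
  zero_mem' := by simp
  smul_mem' := by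
    rintro c f ⟨hf₁, hf₂⟩
    exact ⟨fun a => by simp [mul_left_comm _ c, ← mul_sum, hf₁],
      fun b => by simp [mul_left_comm _ c, ← mul_sum, hf₂]⟩

theorem doublyCenter_eq_self {w f : α → β → ℝ} (hf : f ∈ doublyCentered w) :
    doublyCenter w f = f := by
  funext a b
  simp [doublyCenter, rowMean, colMean, totalMean, weightedMean, hf.1, hf.2]

variable {w : α → β → ℝ}

theorem sum_sum_pos (hpos : ∀ a b, 0 < w a b) (a : α) (b : β) :
    0 < ∑ a, ∑ b, w a b :=
  sum_pos (fun a' _ => sum_pos (fun b' _ => hpos a' b') ⟨b, mem_univ b⟩) ⟨a, mem_univ a⟩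

theorem sum_mul_colMean (hpos : ∀ a b, 0 < w a b) (hind : IsIndependent w)
    (C : α → β → ℝ) (a : α) :
    ∑ b, w a b * colMean w C b = (∑ b, w a b) * totalMean w C := by
  have hcol : ∀ b, w a b * colMean w C b =
      (∑ b', w a b') / (∑ a', ∑ b', w a' b') * ∑ a', w a' b * C a' b := by
    intro b
    have := (sum_pos (fun a' _ => hpos a' b) ⟨a, mem_univ a⟩).ne'
    have := (sum_sum_pos hpos a b).ne'
    unfold colMean weightedMean
    field_simp
    linear_combination (∑ a', w a' b * C a' b) * hind a b
  rw [sum_congr rfl fun b _ => hcol b, ← mul_sum, totalMean,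
    sum_comm (f := fun a b => w a b * C a b)]
  ring

theorem sum_mul_rowMean (hpos : ∀ a b, 0 < w a b) (hind : IsIndependent w)
    (C : α → β → ℝ) (b : β) :
    ∑ a, w a b * rowMean w C a = (∑ a, w a b) * totalMean w C := by
  have hrow : ∀ a, w a b * rowMean w C a =
      (∑ a', w a' b) / (∑ a', ∑ b', w a' b') * ∑ b', w a b' * C a b' := by
    intro a
    have := (sum_pos (fun b' _ => hpos a b') ⟨b, mem_univ b⟩).ne'
    have := (sum_sum_pos hpos a b).ne'
    unfold rowMean weightedMean
    field_simp
    linear_combination (∑ b', w a b' * C a b') * hind a b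
  rw [sum_congr rfl fun a _ => hrow a, ← mul_sum, totalMean]
  ring

theorem doublyCenter_mem_doublyCentered (hpos : ∀ a b, 0 < w a b) (hind : IsIndependent w)
    (C : α → β → ℝ) : doublyCenter w C ∈ doublyCentered w := by
  refine ⟨fun a => ?_, fun b => ?_⟩
  · simp only [doublyCenter, mul_sub, mul_add, sum_sub_distrib, sum_add_distrib, ← sum_mul]
    rw [rowMean, sum_mul_weightedMean (fun b => (hpos a b).le), sum_mul_colMean hpos hind]
    ring
  · simp only [doublyCenter, mul_sub, mul_add, sum_sub_distrib, sum_add_distrib, ← sum_mul]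
    rw [colMean, sum_mul_weightedMean (fun a => (hpos a b).le), sum_mul_rowMean hpos hind]
    ring

theorem exists_doublyCenter_eq_iff (hpos : ∀ a b, 0 < w a b) (hind : IsIndependent w)
    (f : α → β → ℝ) : (∃ C, f = doublyCenter w C) ↔ f ∈ doublyCentered w :=
  ⟨fun ⟨C, hC⟩ => hC ▸ doublyCenter_mem_doublyCentered hpos hind C,
    fun hf => ⟨f, (doublyCenter_eq_self hf).symm⟩⟩

noncomputable def rowProb (w : α → β → ℝ) (a₀ : α) : ℝ :=
  (∑ b, w a₀ b) / ∑ a, ∑ b, w a b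

noncomputable def colProb (w : α → β → ℝ) (b₀ : β) : ℝ :=
  (∑ a, w a b₀) / ∑ a, ∑ b, w a b

theorem sum_mul_indicator_sub_colProb [DecidableEq β] (hpos : ∀ a b, 0 < w a b)
    (hind : IsIndependent w) (a : α) (b₀ : β) :
    ∑ b, w a b * ((if b = b₀ then 1 else 0) - colProb w b₀) = 0 := by
  have := (sum_sum_pos hpos a b₀).ne'
  simp only [mul_sub, mul_ite, mul_one, mul_zero, sum_sub_distrib, sum_ite_eq', mem_univ,
    if_true, ← sum_mul, colProb]
  field_simp
  linear_combination hind a b₀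

theorem sum_mul_indicator_sub_rowProb [DecidableEq α] (hpos : ∀ a b, 0 < w a b)
    (hind : IsIndependent w) (a₀ : α) (b : β) :
    ∑ a, w a b * ((if a = a₀ then 1 else 0) - rowProb w a₀) = 0 := by
  have := (sum_sum_pos hpos a₀ b).ne'
  simp only [mul_sub, mul_ite, mul_one, mul_zero, sum_sub_distrib, sum_ite_eq', mem_univ,
    if_true, ← sum_mul, rowProb]
  field_simp
  linear_combination hind a₀ b

noncomputable def centeredProduct [DecidableEq α] [DecidableEq β] (w : α → β → ℝ)
    (a₀ : α) (b₀ : β) : α → β → ℝ :=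
  fun a b =>
    ((if b = b₀ then 1 else 0) - colProb w b₀) * ((if a = a₀ then 1 else 0) - rowProb w a₀)

theorem centeredProduct_mem_doublyCentered [DecidableEq α] [DecidableEq β]
    (hpos : ∀ a b, 0 < w a b) (hind : IsIndependent w) (a₀ : α) (b₀ : β) :
    centeredProduct w a₀ b₀ ∈ doublyCentered w := by
  refine ⟨fun a => ?_, fun b => ?_⟩
  · simp only [centeredProduct, ← mul_assoc, ← sum_mul,
      sum_mul_indicator_sub_colProb hpos hind, zero_mul]
  · simp only [centeredProduct, mul_left_comm (w _ b), ← mul_sum,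
      sum_mul_indicator_sub_rowProb hpos hind, mul_zero]

end General

section Binary

variable {w : Bool → Bool → ℝ}

theorem eq_zero_of_mem_doublyCentered (hpos : ∀ a b, 0 < w a b) {f : Bool → Bool → ℝ}
    (hf : f ∈ doublyCentered w) (htt : f true true = 0) : f = 0 := by
  obtain ⟨hrow, hcol⟩ := hf
  have htf : f true false = 0 := by
    simpa [Fintype.sum_bool, htt, (hpos true false).ne'] using hrow true
  have hft : f false true = 0 := by
    simpa [Fintype.sum_bool, htt, (hpos false true).ne'] using hcol true
  have hff : f false false = 0 := by
    simpa [Fintype.sum_bool, hft, (hpos false false).ne'] using hrow false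
  funext a b
  cases a <;> cases b <;> assumption

theorem centeredProduct_true_true_ne_zero (hpos : ∀ a b, 0 < w a b) :
    centeredProduct w true true true true ≠ 0 := by
  have hT := sum_sum_pos hpos true true
  have hcol : colProb w true < 1 := by
    rw [colProb, div_lt_one hT]
    simp only [Fintype.sum_bool]
    linarith [hpos true false, hpos false false]
  have hrow : rowProb w true < 1 := by
    rw [rowProb, div_lt_one hT]
    simp only [Fintype.sum_bool]
    linarith [hpos false true, hpos false false]
  simp [centeredProduct, sub_eq_zero, hcol.ne', hrow.ne']

theorem doublyCentered_eq_span (hpos : ∀ a b, 0 < w a b) (hind : IsIndependent w) :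
    doublyCentered w = ℝ ∙ centeredProduct w true true := by
  have hg_mem := centeredProduct_mem_doublyCentered hpos hind true true
  refine le_antisymm (fun f hf => ?_) ((Submodule.span_singleton_le_iff_mem _ _).mpr hg_mem)
  set g := centeredProduct w true true
  have hg := centeredProduct_true_true_ne_zero hpos
  have hres : f - (f true true / g true true) • g = 0 :=
    eq_zero_of_mem_doublyCentered hpos (sub_mem hf (Submodule.smul_mem _ _ hg_mem))
      (by simp [g, hg])
  exact Submodule.mem_span_singleton.mpr ⟨_, (sub_eq_zero.mp hres).symm⟩

end Binary

end TwoWayTable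

open TwoWayTable in
theorem stmt16_general {𝒳 : Type*} [Fintype 𝒳]
    (p : 𝒳 → Bool → Bool → ℝ)     -- joint law of (X, Z, Y), Z and Y binary
    (hpos : ∀ x z y, 0 < p x z y)
    -- conditional independence Y ⊥ Z | X
    (hci : ∀ x z y, p x z y * (∑ z', ∑ y', p x z' y') =
      (∑ z', p x z' y) * (∑ y', p x z y'))
    (EY EZ : 𝒳 → ℝ)
    (hEY : ∀ x, EY x = (∑ z, p x z true) / (∑ z, ∑ y, p x z y))
    (hEZ : ∀ x, EZ x = (∑ y, p x true y) / (∑ z, ∑ y, p x z y)) :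
    ∀ f : 𝒳 → Bool → Bool → ℝ,
      (∃ C : 𝒳 → Bool → Bool → ℝ, ∀ x z y,
          f x z y = C x z y -
            ((∑ y', p x z y' * C x z y') / (∑ y', p x z y') +
             (∑ z', p x z' y * C x z' y) / (∑ z', p x z' y) -
             (∑ z', ∑ y', p x z' y' * C x z' y') / (∑ z', ∑ y', p x z' y')))
      ↔ (∃ b : 𝒳 → ℝ, ∀ x z y,
          f x z y = b x * ((if y then (1:ℝ) else 0) - EY x) *
            ((if z then (1:ℝ) else 0) - EZ x)) := by
  intro f
  obtain rfl : EY = fun x => colProb (p x) true := funext hEY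
  obtain rfl : EZ = fun x => rowProb (p x) true := funext hEZ
  have hslice : ∀ x, (∃ C, ∀ z y, f x z y = doublyCenter (p x) C z y) ↔
      ∃ t, ∀ z y, f x z y = t * centeredProduct (p x) true true z y := by
    intro x
    have h := exists_doublyCenter_eq_iff (hpos x) (hci x) (f x)
    rw [doublyCentered_eq_span (hpos x) (hci x), Submodule.mem_span_singleton] at h
    simpa only [funext_iff, Pi.smul_apply, smul_eq_mul] using
      h.trans (exists_congr fun t => eq_comm)
  simp only [mul_assoc]
  exact Classical.skolem.symm.trans ((forall_congr' hslice).trans Classical.skolem)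

/-- for binary `Y` and `Z` (arbitrary discrete `X`) with
`Y ⊥ Z | X`, the orthocomplement `N₁^⊥ = {C - C†}`
(`C† = E[C|Z,X] + E[C|Y,X] - E[C|X]`) is exactly the set of functions of the
form `b(X) (Y - E[Y|X]) (Z - E[Z|X])`. -/
theorem stmt16 {𝒳 : Type*} [Fintype 𝒳]
    (p : 𝒳 → Bool → Bool → ℝ)     -- joint law of (X, Z, Y), Z and Y binary
    (hpos : ∀ x z y, 0 < p x z y)
    (hsum : ∑ x, ∑ z, ∑ y, p x z y = 1)
    -- conditional independence Y ⊥ Z | X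
    (hci : ∀ x z y, p x z y * (∑ z', ∑ y', p x z' y') =
      (∑ z', p x z' y) * (∑ y', p x z y'))
    (EY EZ : 𝒳 → ℝ)
    (hEY : ∀ x, EY x = (∑ z, p x z true) / (∑ z, ∑ y, p x z y))
    (hEZ : ∀ x, EZ x = (∑ y, p x true y) / (∑ z, ∑ y, p x z y)) :
    ∀ f : 𝒳 → Bool → Bool → ℝ,
      (∃ C : 𝒳 → Bool → Bool → ℝ, ∀ x z y,
          f x z y = C x z y -
            ((∑ y', p x z y' * C x z y') / (∑ y', p x z y') +
             (∑ z', p x z' y * C x z' y) / (∑ z', p x z' y) -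
             (∑ z', ∑ y', p x z' y' * C x z' y') / (∑ z', ∑ y', p x z' y')))
      ↔ (∃ b : 𝒳 → ℝ, ∀ x z y,
          f x z y = b x * ((if y then (1:ℝ) else 0) - EY x) *
            ((if z then (1:ℝ) else 0) - EZ x)) :=
  stmt16_general p hpos hci EY EZ hEY hEZ
end

section
/- Let (L, R) be complete data with R ∈ {0,1}, π(L) = P(R=1|L) > σ > 0 a.s., and let the observed data be O = (R, X, Z, YR) where L = (X,Z,Y). For an arbitrary square-integrable function C of L with full-data orthocomplement element C - C†, define N(a) = R(C - C†)/π(L) + (1-R)a(X,Z) - R·E[(1-R)a(X,Z)|L]/π(L). Then E[ N(a)·(R - π(L))·g(X,Z) ] = 0 for all bounded g if and only if a(X,Z) = E[C - C† | R=0, X, Z] almost surely. -/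
/-! With `π = p₁ / (p₁ + p₀)` the inverse weighting cancels cell by cell: in each `(x, z, y)`
the two values of `R` contribute `p₀ (D - a) g` in total, so the orthogonality condition reads
`∑_{x,z} (∑_y p(x,z,y,0) D - a ∑_y p(x,z,y,0)) g = 0` for all `g`, and testing with `g` equal to the
coefficient itself forces every coefficient to vanish. -/

open Finset

lemma sum_bool_ipw_score_eq {p : Bool → ℝ} (h₁ : p true ≠ 0) (hs : p true + p false ≠ 0) {π : ℝ}
    (hπ : π = p true / (p true + p false)) (d a g : ℝ) :
    ∑ b, p b * ((if b then d / π - (1 - π) * a / π else a) *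
      (((if b then (1 : ℝ) else 0) - π) * g)) = p false * (d - a) * g := by
  simp only [Fintype.sum_bool, if_true, Bool.false_eq_true, if_false]
  subst hπ
  field_simp
  ring

lemma sum_ipw_score_eq {𝒴 : Type*} [Fintype 𝒴] {p : 𝒴 → Bool → ℝ} (hpos : ∀ y b, 0 < p y b)
    {π : 𝒴 → ℝ} (hπ : ∀ y, π y = p y true / (p y true + p y false)) (D : 𝒴 → ℝ) (a g : ℝ) :
    ∑ y, ∑ b, p y b * ((if b then D y / π y - (1 - π y) * a / π y else a) *
      (((if b then (1 : ℝ) else 0) - π y) * g)) =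
      ((∑ y, p y false * D y) - a * ∑ y, p y false) * g := by
  simp only [sum_bool_ipw_score_eq (hpos _ true).ne'
    (add_pos (hpos _ true) (hpos _ false)).ne' (hπ _), ← sum_mul, mul_sub, sum_sub_distrib,
    mul_comm a]

lemma forall_sum_sum_mul_eq_zero_iff {α β : Type*} [Fintype α] [Fintype β] (f : α → β → ℝ) :
    (∀ g : α → β → ℝ, ∑ x, ∑ z, f x z * g x z = 0) ↔ ∀ x z, f x z = 0 := by
  refine ⟨fun h x z => ?_, fun h g => by simp [h]⟩
  have hsq := h f
  simp only [← sq] at hsq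
  rw [Fintype.sum_eq_zero_iff_of_nonneg fun x => sum_nonneg fun z _ => sq_nonneg _] at hsq
  have hx := congrFun hsq x
  rw [Pi.zero_apply, Fintype.sum_eq_zero_iff_of_nonneg fun z => sq_nonneg _] at hx
  exact pow_eq_zero_iff two_ne_zero |>.mp (congrFun hx z)

theorem stmt17_general {𝒳 𝒵 𝒴 : Type*} [Fintype 𝒳] [Fintype 𝒵] [Fintype 𝒴]
    (p : 𝒳 → 𝒵 → 𝒴 → Bool → ℝ)   -- joint law of (X, Z, Y, R)
    (π : 𝒳 → 𝒵 → 𝒴 → ℝ)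
    (hpos : ∀ x z y b, 0 < p x z y b)
    (hπ : ∀ x z y, π x z y = p x z y true / (p x z y true + p x z y false))
    (D : 𝒳 → 𝒵 → 𝒴 → ℝ)
    (a : 𝒳 → 𝒵 → ℝ) :
    (∀ g : 𝒳 → 𝒵 → ℝ,
      ∑ x, ∑ z, ∑ y, ∑ b, p x z y b *
        ((if b then D x z y / π x z y - (1 - π x z y) * a x z / π x z y
          else a x z) *
         (((if b then (1:ℝ) else 0) - π x z y) * g x z)) = 0)
    ↔ (∀ x z, a x z * (∑ y, p x z y false) = ∑ y, p x z y false * D x z y) := by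
  simp only [sum_ipw_score_eq (hpos _ _) (hπ _ _)]
  rw [forall_sum_sum_mul_eq_zero_iff]
  exact forall₂_congr fun x z => sub_eq_zero.trans eq_comm

/-- Lemma 1 of the Supplemental Appendix.  With
`π(L) = P(R=1|L) > σ > 0`, full-data orthocomplement element `D = C - C†`
(with `C† = E[C|Z,X] + E[C|Y,X] - E[C|X]` under the full-data law of
`L = (X,Z,Y)`), and
`N(a) = R D/π(L) + (1-R) a(X,Z) - R E[(1-R)a(X,Z)|L]/π(L)`
(note `E[(1-R)a(X,Z)|L] = (1-π(L)) a(X,Z)`), one has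
`E[N(a) (R - π(L)) g(X,Z)] = 0` for all `g` iff
`a(X,Z) = E[D | R=0, X, Z]` almost surely. -/
theorem stmt17 {𝒳 𝒵 𝒴 : Type*} [Fintype 𝒳] [Fintype 𝒵] [Fintype 𝒴]
    (p : 𝒳 → 𝒵 → 𝒴 → Bool → ℝ)   -- joint law of (X, Z, Y, R)
    (σ : ℝ) (π : 𝒳 → 𝒵 → 𝒴 → ℝ)
    (hpos : ∀ x z y b, 0 < p x z y b)
    (hsum : ∑ x, ∑ z, ∑ y, ∑ b, p x z y b = 1)
    (hπ : ∀ x z y, π x z y = p x z y true / (p x z y true + p x z y false))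
    (hσ : 0 < σ) (hπσ : ∀ x z y, σ < π x z y)
    (C D : 𝒳 → 𝒵 → 𝒴 → ℝ)
    -- D = C - C† under the full-data law pL(x,z,y) = Σ_b p(x,z,y,b)
    (hD : ∀ x z y, D x z y = C x z y -
      ((∑ y', (∑ b, p x z y' b) * C x z y') / (∑ y', ∑ b, p x z y' b) +
       (∑ z', (∑ b, p x z' y b) * C x z' y) / (∑ z', ∑ b, p x z' y b) -
       (∑ z', ∑ y', (∑ b, p x z' y' b) * C x z' y') /
         (∑ z', ∑ y', ∑ b, p x z' y' b)))
    (a : 𝒳 → 𝒵 → ℝ) :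
    (∀ g : 𝒳 → 𝒵 → ℝ,
      ∑ x, ∑ z, ∑ y, ∑ b, p x z y b *
        ((if b then D x z y / π x z y - (1 - π x z y) * a x z / π x z y
          else a x z) *
         (((if b then (1:ℝ) else 0) - π x z y) * g x z)) = 0)
    ↔ (∀ x z, a x z * (∑ y, p x z y false) = ∑ y, p x z y false * D x z y) :=
  stmt17_general p π hpos hπ D a
end
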